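/- arXiv:2306.14532 — 10 statements merged into one kernel-verified Lean document; each statement's English description precedes it below -/
import Mathlib

section
/- Let G be a finite group and N a nontrivial normal subgroup of G. If N satisfies a mixed identity with constants in G of length l, then G satisfies a mixed identity (with constants in G) of length at most 2l. -/
/-!
Pick `c ≠ 1` in `N`. For `f ∈ N`, substituting `x_i ↦ x_i⁻¹ c x_i f` turns `w` into a word of
length `2 l` all of whose values are values of `w` on `N`, hence trivial. The new word is reduced
unless `f` is one of the at most `l - 1` values that make the constant between two consecutive
blocks trivial, so a good `f` exists once `|N| > l`. If `|N| ≤ l`, the word `(x⁻¹ c x c) ^ |N|`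
of length `2 |N| ≤ 2 l` is an identity, because `x⁻¹ c x c ∈ N`.
-/

/-- A word with constants in `C` and `r` variables, in normal form:
`w = c₀ x_{i(1)}^{ε(1)} c₁ ⋯ c_{l-1} x_{i(l)}^{ε(l)} c_l`. -/
structure MixedWord (C : Type*) [Group C] (r : ℕ) where
  /-- the length `l` of the word: the number of occurrences of variables -/
  len : ℕ
  /-- the index `i(j)` of the variable occurring in the `j`-th position -/
  idx : Fin len → Fin r
  /-- the exponent `ε(j) = ±1` of the `j`-th variable occurrence -/
  sgn : Fin len → ℤ
  /-- the constants `c₀, …, c_l` -/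
  con : Fin (len + 1) → C
  sgn_pm : ∀ j, sgn j = 1 ∨ sgn j = -1

namespace MixedWord

variable {C : Type*} [Group C] {r : ℕ}

/-- Evaluation of a word with constants at an assignment of the variables. -/
def eval (w : MixedWord C r) (a : Fin r → C) : C :=
  w.con 0 * (List.ofFn fun j : Fin w.len => a (w.idx j) ^ w.sgn j * w.con j.succ).prod

/-- A word with constants is reduced if whenever two adjacent variable occurrences could
cancel (same variable, opposite exponents), the intermediate constant is nontrivial. -/
def Reduced (w : MixedWord C r) : Prop :=
  ∀ (j : ℕ) (h : j + 1 < w.len),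
    w.idx ⟨j, Nat.lt_of_succ_lt h⟩ = w.idx ⟨j + 1, h⟩ →
    w.sgn ⟨j, Nat.lt_of_succ_lt h⟩ = -w.sgn ⟨j + 1, h⟩ →
    w.con ⟨j + 1, Nat.lt_succ_of_lt h⟩ ≠ 1

/-- A reduced word is cyclically reduced if moreover, whenever the last and first variable
occurrences could cancel, `c_l c₀ ≠ 1`. -/
def CyclicallyReduced (w : MixedWord C r) : Prop :=
  w.Reduced ∧ ∀ h : 0 < w.len,
    w.idx ⟨w.len - 1, by omega⟩ = w.idx ⟨0, h⟩ →
    w.sgn ⟨w.len - 1, by omega⟩ = -w.sgn ⟨0, h⟩ →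
    w.con (Fin.last w.len) * w.con 0 ≠ 1

end MixedWord

theorem List.prod_ofFn_of_eq_two_mul {M : Type*} [Monoid M] {m n : ℕ} (h : m = 2 * n)
    (F : Fin m → M) :
    (List.ofFn F).prod =
      (List.ofFn fun t : Fin n => F ⟨2 * t, by omega⟩ * F ⟨2 * t + 1, by omega⟩).prod := by
  subst h
  rw [List.ofFn_mul', List.prod_flatten, List.map_ofFn]
  simp [Function.comp_def, List.ofFn_succ]

theorem List.prod_ofFn_telescope {G : Type*} [Group G] {n : ℕ} (g : ℕ → G) (u : Fin n → G) :
    g 0 * (List.ofFn fun t : Fin n => (g t)⁻¹ * u t * g (t + 1)).prod =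
      (List.ofFn u).prod * g n := by
  induction n with
  | zero => simp
  | succ n ih =>
    rw [List.ofFn_succ', List.prod_concat, ← mul_assoc]
    simp only [Fin.val_castSucc, Fin.val_last]
    rw [ih (fun t => u t.castSucc), List.ofFn_succ', List.prod_concat]
    group

namespace MixedWord

variable {G : Type*} [Group G] {r : ℕ}

def sgnAfter (w : MixedWord G r) (t : ℕ) : ℤ :=
  if h : t < w.len then w.sgn ⟨t, h⟩ else 0

def sgnBefore (w : MixedWord G r) (t : ℕ) : ℤ :=
  if t = 0 then 0 else w.sgnAfter (t - 1)

def leadConst (f : G) (ε : ℤ) : G := if ε = -1 then f⁻¹ else 1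

def trailConst (f : G) (ε : ℤ) : G := if ε = 1 then f else 1

theorem conj_mul_zpow (x c f : G) {ε : ℤ} (hε : ε = 1 ∨ ε = -1) :
    (x⁻¹ * c * x * f) ^ ε = leadConst f ε * (x⁻¹ * c ^ ε * x) * trailConst f ε := by
  rcases hε with rfl | rfl <;> simp [leadConst, trailConst, mul_assoc]

/-- The substitution `x_i ↦ x_i⁻¹ c x_i f`. By `conj_mul_zpow`, each `w.con t` gets multiplied by
the `trailConst` of the occurrence before it and the `leadConst` of the occurrence after it; a
missing occurrence counts as exponent `0`, for which both are `1`. -/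
def substConj (w : MixedWord G r) (c f : G) : MixedWord G r where
  len := 2 * w.len
  idx k := w.idx ⟨k / 2, by omega⟩
  sgn k := if k.val % 2 = 0 then -1 else 1
  con k :=
    if k.val % 2 = 1 then c ^ w.sgnAfter (k / 2)
    else trailConst f (w.sgnBefore (k / 2)) * w.con ⟨k / 2, by omega⟩ *
      leadConst f (w.sgnAfter (k / 2))
  sgn_pm k := by split <;> simp

section substConj

variable (w : MixedWord G r) (c f : G)

@[simp] theorem len_substConj : (w.substConj c f).len = 2 * w.len := rfl

theorem idx_substConj (k : Fin (w.substConj c f).len) :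
    (w.substConj c f).idx k = w.idx ⟨k / 2, by have := k.2; simp at this; omega⟩ := rfl

theorem sgn_substConj (k : Fin (w.substConj c f).len) :
    (w.substConj c f).sgn k = if k.val % 2 = 0 then -1 else 1 := rfl

theorem con_substConj_zero :
    (w.substConj c f).con 0 = w.con 0 * leadConst f (w.sgnAfter 0) := by
  simp [substConj, sgnBefore, trailConst]

theorem con_substConj_odd (t : ℕ) (ht : t < w.len) :
    (w.substConj c f).con ⟨2 * t + 1, by simp; omega⟩ = c ^ w.sgn ⟨t, ht⟩ := by
  simp [substConj, Nat.add_mod, sgnAfter, ht, show (2 * t + 1) / 2 = t by omega]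

theorem con_substConj_even (t : ℕ) (ht : t < w.len) :
    (w.substConj c f).con ⟨2 * t + 2, by simp; omega⟩ =
      trailConst f (w.sgn ⟨t, ht⟩) * w.con ⟨t + 1, by omega⟩ *
        leadConst f (w.sgnAfter (t + 1)) := by
  simp [substConj, sgnBefore, sgnAfter, ht, show (2 * t + 2) / 2 = t + 1 by omega]

end substConj

theorem eval_substConj (w : MixedWord G r) (c f : G) (a : Fin r → G) :
    (w.substConj c f).eval a = w.eval fun i => (a i)⁻¹ * c * a i * f := by
  let g : ℕ → G := fun t => leadConst f (w.sgnAfter t)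
  rw [eval, eval, con_substConj_zero, mul_assoc,
    List.prod_ofFn_of_eq_two_mul (len_substConj w c f)]
  congr 1
  calc _ = g 0 * (List.ofFn fun t : Fin w.len => (g t)⁻¹ *
        (((a (w.idx t))⁻¹ * c * a (w.idx t) * f) ^ w.sgn t * w.con t.succ) * g (t + 1)).prod := by
        congr 3
        funext ⟨t, ht⟩
        simp only [Fin.succ_mk, idx_substConj, sgn_substConj, con_substConj_odd w c f t ht,
          con_substConj_even w c f t ht, show (2 * t + 1) / 2 = t by omega,
          show 2 * t / 2 = t by omega, show (2 * t + 1) % 2 = 1 by omega, Nat.mul_mod_right,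
          if_true, one_ne_zero, if_false, zpow_one,
          conj_mul_zpow _ _ _ (w.sgn_pm _), g, sgnAfter, dif_pos ht]
        group
    _ = _ := by rw [List.prod_ofFn_telescope, show g w.len = 1 by simp [g, sgnAfter, leadConst],
        mul_one]

theorem substConj_reduced {w : MixedWord G r} {c f : G} (hw : w.Reduced) (hc : c ≠ 1)
    (hf : ∀ (t : ℕ) (h : t + 1 < w.len), w.con ⟨t + 1, by omega⟩ ≠ f ^ (-w.sgn ⟨t, by omega⟩)) :
    (w.substConj c f).Reduced := by
  intro j hj hidx _
  simp only [len_substConj] at hj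
  obtain ⟨t, rfl | rfl⟩ := Nat.even_or_odd' j
  · rw [con_substConj_odd w c f t (by omega)]
    rcases w.sgn_pm ⟨t, by omega⟩ with h | h <;> simp [h, hc]
  · have ht : t + 1 < w.len := by omega
    simp only [idx_substConj, show (2 * t + 1) / 2 = t by omega,
      show (2 * t + 1 + 1) / 2 = t + 1 by omega] at hidx
    have hcon := hw t ht hidx
    have hft := hf t ht
    rw [con_substConj_even w c f t (by omega), sgnAfter, dif_pos ht]
    -- the constant between the blocks is `f d`, `f d f⁻¹`, `d` or `d f⁻¹` for `d = w.con (t + 1)`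
    rcases w.sgn_pm ⟨t, by omega⟩ with h₁ | h₁ <;> rcases w.sgn_pm ⟨t + 1, ht⟩ with h₂ | h₂ <;>
      simp only [h₁, h₂, trailConst, leadConst, zpow_neg, zpow_one, inv_inv] at hcon hft ⊢ <;>
      norm_num at hcon ⊢
    · rwa [mul_eq_one_iff_eq_inv']
    · exact hcon
    · exact hcon
    · rwa [mul_inv_eq_one]

theorem exists_mem_forall_con_ne_zpow (w : MixedWord G r) (S : Set G)
    (hS : w.len - 1 < S.ncard) :
    ∃ f ∈ S, ∀ (t : ℕ) (h : t + 1 < w.len),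
      w.con ⟨t + 1, by omega⟩ ≠ f ^ (-w.sgn ⟨t, by omega⟩) := by
  classical
  have hfin : S.Finite := Set.finite_of_ncard_pos (by omega)
  let bad : Finset G := Finset.univ.image fun t : Fin (w.len - 1) =>
    w.con ⟨t + 1, by omega⟩ ^ (-w.sgn ⟨t, by omega⟩)
  have hcard : bad.card < hfin.toFinset.card := by
    rw [← Set.ncard_eq_toFinset_card S hfin]
    exact Finset.card_image_le.trans_lt (by simpa using hS)
  obtain ⟨f, hfS, hfbad⟩ := Finset.exists_mem_notMem_of_card_lt_card hcard
  refine ⟨f, hfin.mem_toFinset.1 hfS, fun t ht hft => hfbad ?_⟩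
  refine Finset.mem_image.2 ⟨⟨t, by omega⟩, Finset.mem_univ _, ?_⟩
  rcases w.sgn_pm ⟨t, by omega⟩ with h | h <;> simp [hft, h]

variable (G) in
def powWord (n : ℕ) : MixedWord G 1 where
  len := n
  idx _ := 0
  sgn _ := 1
  con _ := 1
  sgn_pm _ := Or.inl rfl

theorem eval_powWord (n : ℕ) (a : Fin 1 → G) : (powWord G n).eval a = a 0 ^ n := by
  simp [eval, powWord]

theorem powWord_reduced (n : ℕ) : (powWord G n).Reduced := by
  intro _ _ _ h
  simp [powWord] at h

end MixedWord

/-- If a nontrivial normal subgroup `N` of a finite group `G` satisfies a mixed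
identity with constants in `G` of length `l`, then `G` satisfies a mixed identity (with
constants in `G`) of length at most `2 * l`. -/
theorem stmt2 {G : Type*} [Group G] [Finite G] (N : Subgroup G) [N.Normal] (hN : N ≠ ⊥)
    {r : ℕ} (w : MixedWord G r) (hred : w.Reduced) (hpos : 0 < w.len)
    (hid : ∀ a : Fin r → G, (∀ i, a i ∈ N) → w.eval a = 1) :
    ∃ (r' : ℕ) (w' : MixedWord G r'), w'.Reduced ∧ 0 < w'.len ∧ w'.len ≤ 2 * w.len ∧
      ∀ a : Fin r' → G, w'.eval a = 1 := by
  obtain ⟨c, hcN, hc⟩ := N.bot_or_exists_ne_one.resolve_left hN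
  have hconj_mul_mem : ∀ {f} (x : G), f ∈ N → x⁻¹ * c * x * f ∈ N := fun x hf =>
    N.mul_mem (‹N.Normal›.conj_mem' c hcN x) hf
  rcases le_or_gt (Nat.card N) w.len with hsmall | hlarge
  · refine ⟨1, (MixedWord.powWord G (Nat.card N)).substConj c c, ?_,
      by simp [MixedWord.powWord], Nat.mul_le_mul_left 2 hsmall, fun a => ?_⟩
    · refine MixedWord.substConj_reduced (MixedWord.powWord_reduced _) hc fun _ _ => ?_
      simpa [MixedWord.powWord] using hc
    · rw [MixedWord.eval_substConj, MixedWord.eval_powWord]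
      exact orderOf_dvd_iff_pow_eq_one.1 (N.orderOf_dvd_natCard (hconj_mul_mem _ hcN))
  · obtain ⟨f, hfN, hf⟩ := w.exists_mem_forall_con_ne_zpow N
      (by rw [← Nat.card_coe_set_eq, SetLike.coe_sort_coe]; omega)
    refine ⟨r, w.substConj c f, MixedWord.substConj_reduced hred hc hf,
      Nat.mul_pos two_pos hpos, le_rfl, fun a => ?_⟩
    rw [MixedWord.eval_substConj]
    exact hid _ fun i => hconj_mul_mem _ hfN
end

section
/- Let G ≤ C be finite groups and let w = c₀ x_{i(1)}^{ε(1)} c₁ ⋯ c_{l-1} x_{i(l)}^{ε(l)} c_l ∈ C * F_r be a reduced word of length l ≤ |G|. Then there exist elements g_{-i}, g_i ∈ G (for i = 1,…,r) such that substituting x_i ↦ g_{-i} x g_i yields a one-variable word w' = c₀' x^{ε(1)} c₁' ⋯ c_{l-1}' x^{ε(l)} c_l' ∈ C * ⟨x⟩ in which all intermediate constants c₁',…,c_{l-1}' are nontrivial. -/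
/-!
Encode the `2r` choices `g_{±i}` as one function on the slots `Bool × Fin r`. The `j`-th new
constant depends only on the values in two slots. If these slots coincide, the constant is a
conjugate of `c_j`, nontrivial by reducedness. Otherwise, for each value of the second slot
at most one value of the first makes it trivial, so at most a `1/|G|`-th of all assignments
is bad for it; with `l - 1 < |G|` constraints, some assignment is good for all of them.
-/

open Finset Fintype

section SlotAssignment

variable {ι α : Type*} [Fintype ι] [DecidableEq ι] [Fintype α]

theorem card_filter_rel_apply_mul_card_le {i j : ι} (hij : i ≠ j) (R : α → α → Prop)
    [DecidableRel R] (hR : ∀ y, {x | R x y}.Subsingleton) :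
    #{f : ι → α | R (f i) (f j)} * card α ≤ card (ι → α) := by
  let e := Equiv.piSplitAt i fun _ => α
  have hinj : Set.InjOn (fun f => (e f).2) {f : ι → α | R (f i) (f j)} := by
    intro f hf f' hf' hff'
    have hj : f j = f' j := congrFun hff' ⟨j, hij.symm⟩
    exact e.injective (Prod.ext (hR (f' j) (hj ▸ hf) hf') hff')
  calc #{f : ι → α | R (f i) (f j)} * card α ≤ card ({k // k ≠ i} → α) * card α := by
        gcongr
        exact card_le_card_of_injOn _ (fun _ _ => mem_univ _) (by simpa using hinj)
    _ = card (ι → α) := by rw [card_congr e, card_prod, mul_comm]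

theorem exists_forall_not_rel_of_card_lt {κ : Type*} [Fintype κ] (hκ : card κ < card α)
    (a b : κ → ι) (R : κ → α → α → Prop) (hR : ∀ k y, {x | R k x y}.Subsingleton)
    (hdiag : ∀ k, a k = b k → ∀ x, ¬ R k x x) :
    ∃ f : ι → α, ∀ k, ¬ R k (f (a k)) (f (b k)) := by
  classical
  let bad k : Finset (ι → α) := {f | R k (f (a k)) (f (b k))}
  have hbad k : #(bad k) * card α ≤ card (ι → α) := by
    by_cases hab : a k = b k
    · simp [bad, hab, hdiag k hab]
    · exact card_filter_rel_apply_mul_card_le hab (R k) (hR k)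
  have : Nonempty α := card_pos_iff.1 (Nat.zero_lt_of_lt hκ)
  have hcard : #(univ.biUnion bad) < #(univ : Finset (ι → α)) := by
    refine Nat.lt_of_mul_lt_mul_right (a := card α) ?_
    calc #(univ.biUnion bad) * card α ≤ (∑ k, #(bad k)) * card α := by
          gcongr; exact card_biUnion_le
      _ ≤ ∑ _k : κ, card (ι → α) := by rw [sum_mul]; exact sum_le_sum fun k _ => hbad k
      _ = card κ * card (ι → α) := by simp
      _ < card α * card (ι → α) := Nat.mul_lt_mul_of_pos_right hκ card_pos
      _ = #univ * card α := by rw [card_univ, mul_comm]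
  obtain ⟨f, -, hf⟩ := exists_mem_notMem_of_card_lt_card hcard
  exact ⟨f, fun k hk => hf (mem_biUnion.2 ⟨k, mem_univ _, by simpa [bad] using hk⟩)⟩

end SlotAssignment

namespace MixedWord

variable {C : Type*} [Group C] {r : ℕ} (w : MixedWord C r)

/- Substituting `x_i ↦ g_{-i} x g_i` turns `x_i^ε` into `g_{-εi}^ε x^ε g_{εi}^ε`. The slot
`(b, i)` stands for `g_i` if `b` and for `g_{-i}` otherwise. -/

def trailSlot (j : Fin w.len) : Bool × Fin r := (decide (w.sgn j = 1), w.idx j)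

def leadSlot (j : Fin w.len) : Bool × Fin r := (!decide (w.sgn j = 1), w.idx j)

theorem trailSlot_eq_leadSlot_iff {j k : Fin w.len} :
    w.trailSlot j = w.leadSlot k ↔ w.idx j = w.idx k ∧ w.sgn j = -w.sgn k := by
  rcases w.sgn_pm j with hj | hj <;> rcases w.sgn_pm k with hk | hk <;>
    simp [trailSlot, leadSlot, hj, hk, and_comm]

/-- The constant `c_{j+1}'` when the trailing factor of the `j`-th occurrence is `x ^ ε(j)` and
the leading factor of the `(j+1)`-th one is `y ^ ε(j+1)` (occurrences counted from `0`). -/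
def substCon (j : ℕ) (h : j + 1 < w.len) (x y : C) : C :=
  x ^ w.sgn ⟨j, by omega⟩ * w.con ⟨j + 1, by omega⟩ * y ^ w.sgn ⟨j + 1, h⟩

theorem zpow_sgn_injective (j : Fin w.len) : Function.Injective fun x : C => x ^ w.sgn j := by
  rcases w.sgn_pm j with h | h <;> simp only [h, zpow_one, zpow_neg_one]
  exacts [Function.injective_id, inv_injective]

theorem substCon_injective_left (j : ℕ) (h : j + 1 < w.len) (y : C) :
    Function.Injective fun x => w.substCon j h x y :=
  (mul_left_injective _).comp ((mul_left_injective _).comp (w.zpow_sgn_injective _))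

theorem substCon_self_ne_one {w : MixedWord C r} (hred : w.Reduced) {j : ℕ} (h : j + 1 < w.len)
    (hidx : w.idx ⟨j, by omega⟩ = w.idx ⟨j + 1, h⟩)
    (hsgn : w.sgn ⟨j, by omega⟩ = -w.sgn ⟨j + 1, h⟩) (x : C) :
    w.substCon j h x x ≠ 1 := by
  rw [substCon, hsgn, zpow_neg]
  intro hconj
  refine hred j h hidx hsgn (conj_eq_one_iff (a := (x ^ w.sgn ⟨j + 1, h⟩)⁻¹).1 ?_)
  rwa [inv_inv]

theorem exists_substCon_ne_one (S : Set C) [Finite S] [Nonempty S] (hred : w.Reduced)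
    (hlen : w.len ≤ Nat.card S) :
    ∃ g : Bool × Fin r → S, ∀ (j : ℕ) (h : j + 1 < w.len),
      w.substCon j h (g (w.trailSlot ⟨j, by omega⟩)) (g (w.leadSlot ⟨j + 1, h⟩)) ≠ 1 := by
  have := Fintype.ofFinite S
  have hκ : card (Fin (w.len - 1)) < card S := by
    rw [Fintype.card_fin, ← Nat.card_eq_fintype_card]
    have := Nat.card_pos (α := S)
    omega
  obtain ⟨g, hg⟩ := exists_forall_not_rel_of_card_lt hκ
    (fun k => w.trailSlot ⟨k, by omega⟩) (fun k => w.leadSlot ⟨k + 1, by omega⟩)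
    (fun k (x y : S) => w.substCon k (by omega) x y = 1)
    (fun k y x hx x' hx' =>
      Subtype.val_injective (w.substCon_injective_left _ _ _ (hx.trans hx'.symm)))
    (fun k hslot x =>
      have ⟨hidx, hsgn⟩ := w.trailSlot_eq_leadSlot_iff.1 hslot
      substCon_self_ne_one hred _ hidx hsgn x)
  exact ⟨g, fun j h => hg ⟨j, by omega⟩⟩

end MixedWord

/-- Here `gpos i` plays the role of `g_i` and `gneg i` that of `g_{-i}`. -/
theorem stmt4 {C : Type*} [Group C] [Finite C] (G : Subgroup C) {r : ℕ}
    (w : MixedWord C r) (hred : w.Reduced) (hlen : w.len ≤ Nat.card G) :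
    ∃ gneg gpos : Fin r → G,
      ∀ (j : ℕ) (h : j + 1 < w.len),
        (if w.sgn ⟨j, Nat.lt_of_succ_lt h⟩ = 1 then
            (gpos (w.idx ⟨j, Nat.lt_of_succ_lt h⟩) : C)
          else ((gneg (w.idx ⟨j, Nat.lt_of_succ_lt h⟩) : C))⁻¹) *
        w.con ⟨j + 1, Nat.lt_succ_of_lt h⟩ *
        (if w.sgn ⟨j + 1, h⟩ = 1 then (gneg (w.idx ⟨j + 1, h⟩) : C)
          else ((gpos (w.idx ⟨j + 1, h⟩) : C))⁻¹) ≠ 1 := by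
  obtain ⟨g, hg⟩ := w.exists_substCon_ne_one (G : Set C) hred hlen
  refine ⟨fun i => g (false, i), fun i => g (true, i), fun j h => ?_⟩
  rcases w.sgn_pm ⟨j, by omega⟩ with h1 | h1 <;> rcases w.sgn_pm ⟨j + 1, h⟩ with h2 | h2 <;>
    simpa [MixedWord.substCon, MixedWord.trailSlot, MixedWord.leadSlot, h1, h2] using hg j h
end

section
/- Every finite group G has a mixed identity with constants in G of length at most |G|, in one variable, cyclically reduced, with all intermediate constants nontrivial. -/
/-!
If `e` is the exponent of `G` and `c ≠ 1`, then `(x c)^e` evaluates to `(g c)^e = 1` at every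
`g`, all of its intermediate constants equal `c`, and since `x` only occurs with exponent `1`
it is cyclically reduced. Its length is `e`, which divides `|G|`.
-/

namespace MixedWord

variable {C : Type*} [Group C]

theorem cyclicallyReduced_of_forall_sgn_eq_one {r : ℕ} (w : MixedWord C r)
    (h : ∀ j, w.sgn j = 1) : w.CyclicallyReduced := by
  refine ⟨fun j hj _ hsgn => ?_, fun _ _ hsgn => ?_⟩ <;>
    · rw [h, h] at hsgn
      exact absurd hsgn (by decide)

/-- The one-variable word `(x c)^n`. -/
def varMulConstPow (c : C) (n : ℕ) : MixedWord C 1 where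
  len := n
  idx _ := 0
  sgn _ := 1
  con j := if j = 0 then 1 else c
  sgn_pm _ := Or.inl rfl

variable (c : C) (n : ℕ)

@[simp]
theorem len_varMulConstPow : (varMulConstPow c n).len = n := rfl

theorem sgn_varMulConstPow (j : Fin n) : (varMulConstPow c n).sgn j = 1 := rfl

theorem con_varMulConstPow_of_ne_zero {j : Fin (n + 1)} (hj : j ≠ 0) :
    (varMulConstPow c n).con j = c :=
  if_neg hj

theorem eval_varMulConstPow (a : Fin 1 → C) : (varMulConstPow c n).eval a = (a 0 * c) ^ n := by
  change 1 * (List.ofFn fun j : Fin n => a 0 ^ (1 : ℤ) * if j.succ = 0 then 1 else c).prod = _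
  simp only [Fin.succ_ne_zero, ite_false, zpow_one, List.ofFn_const, List.prod_replicate, one_mul]

end MixedWord

/-- Every finite group `G` has a mixed identity with constants in `G` of length
at most `|G|`, in one variable, cyclically reduced, with all intermediate constants
nontrivial. -/
theorem stmt5 {G : Type*} [Group G] [Finite G] :
    ∃ w : MixedWord G 1, 0 < w.len ∧ w.len ≤ Nat.card G ∧ w.CyclicallyReduced ∧
      (∀ (j : ℕ) (h : j + 1 < w.len), w.con ⟨j + 1, Nat.lt_succ_of_lt h⟩ ≠ 1) ∧
      ∀ g : G, w.eval (fun _ => g) = 1 := by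
  obtain ⟨c, hc⟩ : ∃ c : G, 1 < Monoid.exponent G → c ≠ 1 := by
    rcases subsingleton_or_nontrivial G with _ | _
    · exact ⟨1, by simp [Monoid.exp_eq_one_of_subsingleton]⟩
    · obtain ⟨c, hc⟩ := exists_ne (1 : G)
      exact ⟨c, fun _ => hc⟩
  set e := Monoid.exponent G
  refine ⟨MixedWord.varMulConstPow c e, Nat.pos_of_ne_zero Monoid.exponent_ne_zero_of_finite,
    Nat.le_of_dvd Nat.card_pos Group.exponent_dvd_nat_card,
    MixedWord.cyclicallyReduced_of_forall_sgn_eq_one _ (MixedWord.sgn_varMulConstPow c e),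
    fun j hj => ?_, fun g => ?_⟩
  · rw [MixedWord.len_varMulConstPow] at hj
    exact (MixedWord.con_varMulConstPow_of_ne_zero c e (Fin.ne_of_val_ne j.succ_ne_zero)).trans_ne
      (hc (by omega))
  · rw [MixedWord.eval_varMulConstPow]
    exact Monoid.pow_exponent_eq_one _
end

section
/- Let G be a nontrivial nonabelian finite group, embedded in a group C with trivial centralizer C_C(G) = 1. Then no word w ∈ C * ⟨x⟩ of length 1 or 2 is a mixed identity for G with constants in C. -/
/-!
Substituting `g = 1` into `c₀ g^ε c₁ g^δ c₂ = 1` gives `c₀ c₁ c₂ = 1`, so a word of length 2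
that vanishes on `G` forces `g^ε c₁ g^δ = c₁` for all `g ∈ G`; since `g ↦ g^ε` permutes `G`,
this reads `g c₁ g⁻¹ = c₁` or `g c₁ g = c₁`. In the first case `c₁` centralizes `G`, so `c₁ = 1`,
and the word is not reduced. In the second case conjugation by `c₁` inverts every element of `G`,
so inversion is an automorphism of `G` and `G` is abelian. A word `c₀ g^ε c₁` of length 1 that
vanishes on `G` makes `g^ε`, hence `g`, constant on `G`.
-/

section

variable {C : Type*} [Group C]

theorem zpow_zpow_self_of_eq_one_or_eq_neg_one {ε : ℤ} (hε : ε = 1 ∨ ε = -1) (g : C) :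
    (g ^ ε) ^ ε = g := by
  rcases hε with rfl | rfl <;> simp

theorem Subgroup.forall_mem_zpow_iff_of_eq_one_or_eq_neg_one (G : Subgroup C) {ε : ℤ}
    (hε : ε = 1 ∨ ε = -1) {P : C → Prop} : (∀ g ∈ G, P (g ^ ε)) ↔ ∀ g ∈ G, P g := by
  refine ⟨fun h g hg => ?_, fun h g hg => h _ (G.zpow_mem hg ε)⟩
  simpa only [zpow_zpow_self_of_eq_one_or_eq_neg_one hε] using h _ (G.zpow_mem hg ε)

theorem Subgroup.mul_comm_of_forall_mul_mul_eq_self {G : Subgroup C} {c : C}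
    (h : ∀ g ∈ G, g * c * g = c) {a b : C} (ha : a ∈ G) (hb : b ∈ G) : a * b = b * a := by
  have conj_eq_inv : ∀ g ∈ G, c⁻¹ * g * c = g⁻¹ := fun g hg =>
    eq_inv_of_mul_eq_one_left <| by
      rw [show c⁻¹ * g * c * g = c⁻¹ * (g * c * g) by group, h g hg, inv_mul_cancel]
  apply inv_injective
  calc (a * b)⁻¹ = c⁻¹ * (a * b) * c := (conj_eq_inv _ (G.mul_mem ha hb)).symm
    _ = (c⁻¹ * a * c) * (c⁻¹ * b * c) := by group
    _ = (b * a)⁻¹ := by rw [conj_eq_inv a ha, conj_eq_inv b hb, mul_inv_rev]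

theorem mul_mul_eq_self_of_mul_mul_eq_one {a b d x y : C} (h : a * (x * b * (y * d)) = 1)
    (h₁ : a * (b * d) = 1) : x * b * y = b := by
  have := mul_left_cancel (h.trans h₁.symm)
  rw [← mul_assoc] at this
  exact mul_right_cancel this

end

namespace MixedWord

variable {C : Type*} [Group C]

theorem not_forall_eval_eq_one_of_len_eq_one {r : ℕ} (G : Subgroup C) [Nontrivial G]
    (w : MixedWord C r) (hw : w.len = 1) : ¬ ∀ g ∈ G, w.eval (fun _ => g) = 1 := by
  obtain ⟨l, idx, sgn, con, hpm⟩ := w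
  subst hw
  simp only [eval, List.ofFn_succ, List.ofFn_zero, List.prod_cons, List.prod_nil, mul_one,
    Fin.succ_zero_eq_one]
  intro hall
  have hconst : ∀ g ∈ G, g ^ sgn 0 = (con 0)⁻¹ * (con 1)⁻¹ := fun g hg => by
    rw [eq_inv_mul_iff_mul_eq, ← mul_inv_eq_one, inv_inv, mul_assoc]
    exact hall g hg
  rw [G.forall_mem_zpow_iff_of_eq_one_or_eq_neg_one (hpm 0)
    (P := fun x => x = (con 0)⁻¹ * (con 1)⁻¹)] at hconst
  obtain ⟨⟨a, ha⟩, ⟨b, hb⟩, hab⟩ := exists_pair_ne G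
  exact hab (Subtype.ext ((hconst a ha).trans (hconst b hb).symm))

theorem not_forall_eval_eq_one_of_len_eq_two (G : Subgroup C)
    (hnab : ∃ a b : G, a * b ≠ b * a) (hcent : ∀ c : C, (∀ g ∈ G, c * g = g * c) → c = 1)
    (w : MixedWord C 1) (hw : w.len = 2) (hred : w.Reduced) :
    ¬ ∀ g ∈ G, w.eval (fun _ => g) = 1 := by
  obtain ⟨l, idx, sgn, con, hpm⟩ := w
  subst hw
  simp only [eval, List.ofFn_succ, List.ofFn_zero, List.prod_cons, List.prod_nil, mul_one,
    Fin.succ_zero_eq_one]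
  intro hall
  have hfix : ∀ g ∈ G, g ^ sgn 0 * con 1 * g ^ sgn 1 = con 1 := fun g hg =>
    mul_mul_eq_self_of_mul_mul_eq_one (hall g hg) (by simpa using hall 1 G.one_mem)
  have hsgn : sgn 1 = sgn 0 ∨ sgn 1 = -sgn 0 := by
    rcases hpm 0 with h₀ | h₀ <;> rcases hpm 1 with h₁ | h₁ <;> omega
  rcases hsgn with hsgn | hsgn
  · rw [hsgn, G.forall_mem_zpow_iff_of_eq_one_or_eq_neg_one (hpm 0)
      (P := fun x => x * con 1 * x = con 1)] at hfix
    obtain ⟨a, b, hab⟩ := hnab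
    exact hab (Subtype.ext (G.mul_comm_of_forall_mul_mul_eq_self hfix a.2 b.2))
  · simp only [hsgn, zpow_neg] at hfix
    rw [G.forall_mem_zpow_iff_of_eq_one_or_eq_neg_one (hpm 0)
      (P := fun x => x * con 1 * x⁻¹ = con 1)] at hfix
    have hcon : con 1 = 1 :=
      hcent _ fun g hg => (mul_inv_eq_iff_eq_mul.mp (hfix g hg)).symm
    exact hred 0 (by norm_num) (Subsingleton.elim _ _) (by simp [hsgn]) hcon

end MixedWord

theorem stmt6_general {C : Type*} [Group C] (G : Subgroup C) [Nontrivial G]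
    (hnab : ∃ a b : G, a * b ≠ b * a)
    (hcent : ∀ c : C, (∀ g ∈ G, c * g = g * c) → c = 1)
    (w : MixedWord C 1) (hw : w.len = 1 ∨ w.len = 2) (hred : w.Reduced) :
    ¬ ∀ g ∈ G, w.eval (fun _ => g) = 1 := by
  rcases hw with hw | hw
  · exact w.not_forall_eval_eq_one_of_len_eq_one G hw
  · exact w.not_forall_eval_eq_one_of_len_eq_two G hnab hcent hw hred

/-- If `G` is a nontrivial nonabelian finite group embedded in a group `C` with
trivial centralizer `C_C(G) = 1`, then no (reduced) word `w ∈ C * ⟨x⟩` of length 1 or 2 is a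
mixed identity for `G` with constants in `C`. -/
theorem stmt6 {C : Type*} [Group C] (G : Subgroup C) [Finite G] [Nontrivial G]
    (hnab : ∃ a b : G, a * b ≠ b * a)
    (hcent : ∀ c : C, (∀ g ∈ G, c * g = g * c) → c = 1)
    (w : MixedWord C 1) (hw : w.len = 1 ∨ w.len = 2) (hred : w.Reduced) :
    ¬ ∀ g ∈ G, w.eval (fun _ => g) = 1 :=
  stmt6_general G hnab hcent w hw hred
end

section
/- Let G be a nonabelian finite group of even order. Then no word w ∈ G * ⟨x⟩ of length 3 is a mixed identity for G (with constants in G). -/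
/-!
Comparing the evaluation at `g` with the evaluation at `1` turns a length-three mixed identity
into a law `g^e₁ c₁ g^e₂ c₂ g^e₃ = c₁ c₂`. Replacing `g` by `g⁻¹` or inverting both sides, only
the sign patterns `(+,-,+)`, `(+,+,+)` and `(-,+,+)` remain. The first forces `c₁ = 1`
(take `g = c₁`), which reducedness forbids. In the other two, well-chosen substitutions show that
every involution `t` is trivial, which contradicts Cauchy's theorem for a group of even order.
-/

section

variable {G : Type*} [Group G]

/-- The right-hand side is the value of the left-hand side at `g = 1`. Suffixes such as `mpp` in
the lemma names below record the signs of `e₁ e₂ e₃`. -/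
def ThreeLetterLaw (e₁ e₂ e₃ : ℤ) (c₁ c₂ : G) : Prop :=
  ∀ g : G, g ^ e₁ * c₁ * g ^ e₂ * c₂ * g ^ e₃ = c₁ * c₂

namespace ThreeLetterLaw

variable {e₁ e₂ e₃ : ℤ} {c₁ c₂ t : G}

theorem neg (h : ThreeLetterLaw e₁ e₂ e₃ c₁ c₂) : ThreeLetterLaw (-e₁) (-e₂) (-e₃) c₁ c₂ := by
  intro g
  simpa only [inv_zpow'] using h g⁻¹

theorem reverse (h : ThreeLetterLaw e₁ e₂ e₃ c₁ c₂) :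
    ThreeLetterLaw (-e₃) (-e₂) (-e₁) c₂⁻¹ c₁⁻¹ := by
  intro g
  simpa only [mul_inv_rev, zpow_neg, mul_assoc] using congrArg (·⁻¹) (h g)

theorem left_eq_one_pmp (h : ThreeLetterLaw 1 (-1) 1 c₁ c₂) : c₁ = 1 := by
  simpa [ThreeLetterLaw, mul_assoc] using h c₁

theorem eq_one_of_sq_eq_one_ppp (h : ThreeLetterLaw 1 1 1 c₁ c₂) (ht : t ^ 2 = 1) : t = 1 := by
  simp only [ThreeLetterLaw, zpow_one] at h
  have h_t : c₁⁻¹ * c₂ * c₁⁻¹ * t = c₁ * c₂ := by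
    rw [← h (c₁⁻¹ * t)]
    calc c₁⁻¹ * c₂ * c₁⁻¹ * t = c₁⁻¹ * t ^ 2 * c₂ * c₁⁻¹ * t := by rw [ht, mul_one]
      _ = _ := by rw [sq]; group
  have h_one : c₁⁻¹ * c₂ * c₁⁻¹ = c₁ * c₂ := by
    rw [← h c₁⁻¹]
    group
  exact mul_eq_left.mp (h_t.trans h_one.symm)

theorem commute_right_mpp (h : ThreeLetterLaw (-1) 1 1 c₁ c₂) (a : G) : Commute c₂ a := by
  simp only [ThreeLetterLaw, zpow_neg, zpow_one] at h
  have hc : c₂ * c₁ * c₂⁻¹ = c₁ * c₂ := by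
    rw [← h c₂⁻¹]
    group
  have h_shift : a⁻¹ * c₁ * (c₂ * a) * a = c₁ * c₂ :=
    calc _ = a⁻¹ * (c₁ * c₂) * a * a := by group
      _ = a⁻¹ * (c₂ * c₁ * c₂⁻¹) * a * a := by rw [hc]
      _ = c₁ * c₂ := by rw [← h (c₂⁻¹ * a)]; group
  have h_a : a⁻¹ * c₁ * (a * c₂) * a = c₁ * c₂ := by
    rw [← h a]
    group
  exact mul_left_cancel (mul_right_cancel (h_shift.trans h_a.symm))

theorem eq_one_of_sq_eq_one_mpp (h : ThreeLetterLaw (-1) 1 1 c₁ c₂) (ht : t ^ 2 = 1) : t = 1 := by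
  have h_t : t⁻¹ * (c₁ * c₂) = c₁ * c₂ :=
    calc t⁻¹ * (c₁ * c₂) = t⁻¹ * c₁ * t ^ 2 * c₂ := by rw [ht]; group
      _ = t⁻¹ * c₁ * t * (c₂ * t) := by rw [(h.commute_right_mpp t).eq, sq]; group
      _ = c₁ * c₂ := by simpa only [zpow_neg, zpow_one, mul_assoc] using h t
  simpa using h_t

theorem eq_one_of_sq_eq_one_ppm (h : ThreeLetterLaw 1 1 (-1) c₁ c₂) (ht : t ^ 2 = 1) : t = 1 :=
  eq_one_of_sq_eq_one_mpp (by simpa using h.reverse.neg) ht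

theorem eq_one_of_sq_eq_one (he₁ : e₁ = 1 ∨ e₁ = -1) (he₂ : e₂ = 1 ∨ e₂ = -1)
    (he₃ : e₃ = 1 ∨ e₃ = -1) (hred : e₁ = -e₂ → c₁ ≠ 1) (h : ThreeLetterLaw e₁ e₂ e₃ c₁ c₂)
    (ht : t ^ 2 = 1) : t = 1 := by
  rcases he₁ with rfl | rfl <;> rcases he₂ with rfl | rfl <;> rcases he₃ with rfl | rfl
  · exact h.eq_one_of_sq_eq_one_ppp ht
  · exact h.eq_one_of_sq_eq_one_ppm ht
  · exact absurd h.left_eq_one_pmp (hred rfl)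
  · exact eq_one_of_sq_eq_one_mpp (by simpa using h.neg) ht
  · exact h.eq_one_of_sq_eq_one_mpp ht
  · exact absurd (left_eq_one_pmp (by simpa using h.neg)) (hred rfl)
  · exact eq_one_of_sq_eq_one_ppm (by simpa using h.neg) ht
  · exact eq_one_of_sq_eq_one_ppp (by simpa using h.neg) ht

theorem of_forall_mul_eq_one {c₀ c₃ : G}
    (h : ∀ g : G, c₀ * (g ^ e₁ * c₁) * (g ^ e₂ * c₂) * (g ^ e₃ * c₃) = 1) :
    ThreeLetterLaw e₁ e₂ e₃ c₁ c₂ := by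
  intro g
  refine mul_left_cancel (a := c₀) (mul_right_cancel (b := c₃) ?_)
  calc c₀ * (g ^ e₁ * c₁ * g ^ e₂ * c₂ * g ^ e₃) * c₃
      = c₀ * (g ^ e₁ * c₁) * (g ^ e₂ * c₂) * (g ^ e₃ * c₃) := by simp only [mul_assoc]
    _ = c₀ * ((1 : G) ^ e₁ * c₁) * ((1 : G) ^ e₂ * c₂) * ((1 : G) ^ e₃ * c₃) :=
      (h g).trans (h 1).symm
    _ = c₀ * (c₁ * c₂) * c₃ := by simp only [one_zpow, one_mul, mul_assoc]

end ThreeLetterLaw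

end

theorem MixedWord.eval_mk_three {C : Type*} [Group C] {r : ℕ} (idx : Fin 3 → Fin r)
    (sgn : Fin 3 → ℤ) (con : Fin 4 → C) (hsgn : ∀ j, sgn j = 1 ∨ sgn j = -1) (a : Fin r → C) :
    (⟨3, idx, sgn, con, hsgn⟩ : MixedWord C r).eval a =
      con 0 * (a (idx 0) ^ sgn 0 * con 1) * (a (idx 1) ^ sgn 1 * con 2) *
        (a (idx 2) ^ sgn 2 * con 3) := by
  simp [MixedWord.eval, List.ofFn_succ, mul_assoc]

theorem stmt7_general {G : Type*} [Group G] [Finite G]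
    (heven : Even (Nat.card G))
    (w : MixedWord G 1) (hw : w.len = 3) (hred : w.Reduced) :
    ¬ ∀ g : G, w.eval (fun _ => g) = 1 := by
  intro h_id
  obtain ⟨t, ht⟩ := exists_prime_orderOf_dvd_card' 2 heven.two_dvd
  obtain ⟨len, idx, sgn, con, hsgn⟩ := w
  subst hw
  have h_law : ThreeLetterLaw (sgn 0) (sgn 1) (sgn 2) (con 1) (con 2) :=
    .of_forall_mul_eq_one fun g => by simpa only [MixedWord.eval_mk_three] using h_id g
  have h_triv := h_law.eq_one_of_sq_eq_one (hsgn 0) (hsgn 1) (hsgn 2)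
    (hred 0 (by norm_num) (Subsingleton.elim _ _)) (ht ▸ pow_orderOf_eq_one t)
  simp [h_triv] at ht

/-- If `G` is a nonabelian finite group of even order, then no (reduced) word
`w ∈ G * ⟨x⟩` of length 3 is a mixed identity for `G` with constants in `G`. -/
theorem stmt7 {G : Type*} [Group G] [Finite G]
    (hnab : ∃ a b : G, a * b ≠ b * a) (heven : Even (Nat.card G))
    (w : MixedWord G 1) (hw : w.len = 3) (hred : w.Reduced) :
    ¬ ∀ g : G, w.eval (fun _ => g) = 1 :=
  stmt7_general heven w hw hred
end

section
/- Let q be a prime power, V = F_q², and c₁,…,c_{l-1} ∈ GL₂(q) whose images in PGL₂(q) each fail to fix some common point of the projective line P(V). Then the following are equivalent: (i) the union of the fixed-point sets in P(V) of the images of c₁,…,c_{l-1} is not all of P(V); (ii) there exists a rank-one linear operator h : V → V with h² = 0 and h c_j h ≠ 0 for all j = 1,…,l-1; (iii) there exists a rank-one linear operator h : V → V with h² = 0 and h c₁ h c₂ h ⋯ h c_{l-1} h ≠ 0. -/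
/-!
Every rank-one matrix with square zero is `h = v wᵀ` with `v ≠ 0`, `w ≠ 0`, `w ⬝ v = 0`, and
conversely. For such an `h` one has `h m h = (w ⬝ m v) • h`, so both `h c_j h` and
`h c₁ h ⋯ c_{l-1} h` are nonzero exactly when `w ⬝ c_j v ≠ 0` for all `j`. In dimension two the
kernel of `w` is the line through `v`, so `w ⬝ c_j v ≠ 0` says that `c_j` moves that line, and
every nonzero `v` has such a `w`.
-/

open Matrix

section Sandwich

variable {R n : Type*} [CommRing R] [Fintype n]

theorem vecMulVec_mul_mul_vecMulVec (v w : n → R) (m : Matrix n n R) :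
    vecMulVec v w * m * vecMulVec v w = (w ⬝ᵥ m *ᵥ v) • vecMulVec v w := by
  rw [Matrix.mul_assoc, mul_vecMulVec, vecMulVec_mul_vecMulVec, vecMulVec_smul]

theorem vecMulVec_mul_mul_vecMulVec_ne_zero_iff [IsDomain R] {v w : n → R} (hv : v ≠ 0)
    (hw : w ≠ 0) (m : Matrix n n R) :
    vecMulVec v w * m * vecMulVec v w ≠ 0 ↔ w ⬝ᵥ m *ᵥ v ≠ 0 := by
  rw [vecMulVec_mul_mul_vecMulVec, smul_ne_zero_iff, and_iff_left (vecMulVec_ne_zero hv hw)]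

variable [DecidableEq n]

theorem vecMulVec_mul_prod_ofFn {k : ℕ} (v w : n → R) (m : Fin k → Matrix n n R) :
    vecMulVec v w * (List.ofFn fun j => m j * vecMulVec v w).prod =
      (∏ j, w ⬝ᵥ m j *ᵥ v) • vecMulVec v w := by
  induction k with
  | zero => simp
  | succ k ih =>
    rw [List.ofFn_succ, List.prod_cons, ← Matrix.mul_assoc, ← Matrix.mul_assoc,
      vecMulVec_mul_mul_vecMulVec, smul_mul_assoc, ih, smul_smul, Fin.prod_univ_succ]

theorem vecMulVec_mul_prod_ofFn_ne_zero_iff [IsDomain R] {k : ℕ} {v w : n → R} (hv : v ≠ 0)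
    (hw : w ≠ 0) (m : Fin k → Matrix n n R) :
    vecMulVec v w * (List.ofFn fun j => m j * vecMulVec v w).prod ≠ 0 ↔
      ∀ j, w ⬝ᵥ m j *ᵥ v ≠ 0 := by
  rw [vecMulVec_mul_prod_ofFn, smul_ne_zero_iff, and_iff_left (vecMulVec_ne_zero hv hw),
    Finset.prod_ne_zero_iff]
  simp only [Finset.mem_univ, true_implies]

end Sandwich

section RankOne

variable {K n : Type*} [Field K] [Fintype n]

theorem rank_vecMulVec_eq_one {v w : n → K} (hv : v ≠ 0) (hw : w ≠ 0) :
    (vecMulVec v w).rank = 1 := by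
  refine le_antisymm (rank_vecMulVec_le v w) (Nat.one_le_iff_ne_zero.mpr fun h0 => ?_)
  rw [rank_eq_finrank_span_cols, Submodule.finrank_eq_zero, Submodule.span_eq_bot] at h0
  exact vecMulVec_ne_zero hv hw (ext fun i j => congrFun (h0 _ ⟨j, rfl⟩) i)

theorem exists_eq_vecMulVec_of_rank_eq_one {h : Matrix n n K} (hr : h.rank = 1) :
    ∃ v w : n → K, v ≠ 0 ∧ w ≠ 0 ∧ h = vecMulVec v w := by
  obtain ⟨⟨v, _⟩, hv, hspan⟩ := finrank_eq_one_iff'.mp (h.rank_eq_finrank_span_cols ▸ hr)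
  choose w hw using fun j => hspan ⟨h.col j, Submodule.subset_span ⟨j, rfl⟩⟩
  have hh : h = vecMulVec v w := by
    ext i j
    simpa [vecMulVec_apply, mul_comm] using (congrFun (congrArg Subtype.val (hw j)) i).symm
  refine ⟨v, w, fun h0 => hv (Subtype.ext h0), fun h0 => ?_, hh⟩
  simp [hh, h0] at hr

theorem rank_eq_one_and_mul_self_eq_zero_iff (h : Matrix n n K) :
    h.rank = 1 ∧ h * h = 0 ↔
      ∃ v w : n → K, v ≠ 0 ∧ w ≠ 0 ∧ w ⬝ᵥ v = 0 ∧ h = vecMulVec v w := by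
  have hsq : ∀ v w : n → K, vecMulVec v w * vecMulVec v w = (w ⬝ᵥ v) • vecMulVec v w := by
    intro v w
    rw [vecMulVec_mul_vecMulVec, vecMulVec_smul]
  constructor
  · rintro ⟨hr, h0⟩
    obtain ⟨v, w, hv, hw, rfl⟩ := exists_eq_vecMulVec_of_rank_eq_one hr
    rw [hsq, smul_eq_zero, or_iff_left (vecMulVec_ne_zero hv hw)] at h0
    exact ⟨v, w, hv, hw, h0, rfl⟩
  · rintro ⟨v, w, hv, hw, hwv, rfl⟩
    exact ⟨rank_vecMulVec_eq_one hv hw, by rw [hsq, hwv, zero_smul]⟩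

end RankOne

section DimensionTwo

variable {K n : Type*} [Field K] [Fintype n] [DecidableEq n]

theorem dotProduct_eq_zero_iff_exists_eq_smul (hn : Fintype.card n = 2) {v w : n → K}
    (hv : v ≠ 0) (hw : w ≠ 0) (hwv : w ⬝ᵥ v = 0) (x : n → K) : w ⬝ᵥ x = 0 ↔ ∃ a : K, x = a • v := by
  set f := dotProductEquiv K n w
  have hf : f ≠ 0 := (LinearEquiv.map_ne_zero_iff _).mpr hw
  have hker : K ∙ v = LinearMap.ker f := by
    refine Submodule.eq_of_le_of_finrank_eq ((Submodule.span_singleton_le_iff_mem _ _).mpr hwv) ?_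
    have := Module.Dual.finrank_ker_add_one_of_ne_zero hf
    rw [Module.finrank_fintype_fun_eq_card, hn] at this
    rw [finrank_span_singleton hv]
    omega
  have hx : x ∈ LinearMap.ker f ↔ x ∈ K ∙ v := by rw [hker]
  simpa [f, Submodule.mem_span_singleton, eq_comm] using hx

theorem exists_ne_zero_forall_not_exists_mulVec_eq_smul_iff (hn : Fintype.card n = 2)
    {ι : Type*} (m : ι → Matrix n n K) (Q : Matrix n n K → Prop)
    (hQ : ∀ v w : n → K, v ≠ 0 → w ≠ 0 → (Q (vecMulVec v w) ↔ ∀ i, w ⬝ᵥ m i *ᵥ v ≠ 0)) :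
    (∃ v : n → K, v ≠ 0 ∧ ∀ i, ¬∃ a : K, m i *ᵥ v = a • v) ↔
      ∃ h : Matrix n n K, h.rank = 1 ∧ h * h = 0 ∧ Q h := by
  have : Nontrivial n := Fintype.one_lt_card_iff_nontrivial.mp (by omega)
  have moves_iff : ∀ {v w : n → K}, v ≠ 0 → w ≠ 0 → w ⬝ᵥ v = 0 →
      ((∀ i, ¬∃ a : K, m i *ᵥ v = a • v) ↔ ∀ i, w ⬝ᵥ m i *ᵥ v ≠ 0) := fun hv hw hwv =>
    forall_congr' fun i => not_congr (dotProduct_eq_zero_iff_exists_eq_smul hn hv hw hwv _).symm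
  constructor
  · rintro ⟨v, hv, hmoves⟩
    obtain ⟨w, hw, hwv⟩ := exists_ne_zero_dotProduct_eq_zero v
    obtain ⟨hr, hsq⟩ := (rank_eq_one_and_mul_self_eq_zero_iff _).mpr ⟨v, w, hv, hw, hwv, rfl⟩
    exact ⟨_, hr, hsq, (hQ v w hv hw).mpr ((moves_iff hv hw hwv).mp hmoves)⟩
  · rintro ⟨h, hr, hsq, hQvw⟩
    obtain ⟨v, w, hv, hw, hwv, rfl⟩ := (rank_eq_one_and_mul_self_eq_zero_iff h).mp ⟨hr, hsq⟩
    exact ⟨v, hv, (moves_iff hv hw hwv).mpr ((hQ v w hv hw).mp hQvw)⟩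

end DimensionTwo

theorem stmt9_general {F : Type*} [Field F] {k : ℕ} (c : Fin k → GL (Fin 2) F) :
    ((∃ v : Fin 2 → F, v ≠ 0 ∧
        ∀ j, ¬∃ a : F, ((c j : Matrix (Fin 2) (Fin 2) F)).mulVec v = a • v) ↔
      (∃ h : Matrix (Fin 2) (Fin 2) F, h.rank = 1 ∧ h * h = 0 ∧
        ∀ j, h * (c j : Matrix (Fin 2) (Fin 2) F) * h ≠ 0)) ∧
    ((∃ v : Fin 2 → F, v ≠ 0 ∧
        ∀ j, ¬∃ a : F, ((c j : Matrix (Fin 2) (Fin 2) F)).mulVec v = a • v) ↔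
      (∃ h : Matrix (Fin 2) (Fin 2) F, h.rank = 1 ∧ h * h = 0 ∧
        h * (List.ofFn fun j : Fin k =>
          (c j : Matrix (Fin 2) (Fin 2) F) * h).prod ≠ 0)) :=
  ⟨exists_ne_zero_forall_not_exists_mulVec_eq_smul_iff (Fintype.card_fin 2) _ _ fun _ _ hv hw =>
      forall_congr' fun _ => vecMulVec_mul_mul_vecMulVec_ne_zero_iff hv hw _,
    exists_ne_zero_forall_not_exists_mulVec_eq_smul_iff (Fintype.card_fin 2) _ _ fun _ _ hv hw =>
      vecMulVec_mul_prod_ofFn_ne_zero_iff hv hw _⟩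

/-- For constants `c₁, …, c_{l-1} ∈ GL₂(q)` (here `c : Fin k → GL (Fin 2) F`),
the following are equivalent:
(i) the union of the fixed-point sets on the projective line `P(F_q²)` of the images of the
`c j` in `PGL₂(q)` is not all of `P(F_q²)`, i.e. there is a nonzero vector `v` spanning a
line fixed by none of the `c j`;
(ii) there is a rank-one matrix `h` with `h² = 0` and `h * c j * h ≠ 0` for all `j`;
(iii) there is a rank-one matrix `h` with `h² = 0` and `h * c₁ * h * c₂ * h ⋯ h * c_{l-1} * h ≠ 0`. -/
theorem stmt9 {F : Type*} [Field F] [Fintype F] {k : ℕ} (c : Fin k → GL (Fin 2) F) :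
    ((∃ v : Fin 2 → F, v ≠ 0 ∧
        ∀ j, ¬∃ a : F, ((c j : Matrix (Fin 2) (Fin 2) F)).mulVec v = a • v) ↔
      (∃ h : Matrix (Fin 2) (Fin 2) F, h.rank = 1 ∧ h * h = 0 ∧
        ∀ j, h * (c j : Matrix (Fin 2) (Fin 2) F) * h ≠ 0)) ∧
    ((∃ v : Fin 2 → F, v ≠ 0 ∧
        ∀ j, ¬∃ a : F, ((c j : Matrix (Fin 2) (Fin 2) F)).mulVec v = a • v) ↔
      (∃ h : Matrix (Fin 2) (Fin 2) F, h.rank = 1 ∧ h * h = 0 ∧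
        h * (List.ofFn fun j : Fin k =>
          (c j : Matrix (Fin 2) (Fin 2) F) * h).prod ≠ 0)) :=
  stmt9_general c
end

section
/- Let q = p^e be a prime power. Every g ∈ SL₂(q) satisfies one of: g^{q-1} is central, g^{q+1} is central, or g^p is central in SL₂(q). Consequently the word v(x,y) = [[[x,y^p],y^{-(q-1)}],y^{q+1}] ∈ F₂ is a law (identity without constants) for SL₂(q). -/
/-!
The characteristic polynomial of `g ∈ SL₂(F)` is `χ = X² - tX + 1`, with `t` the trace, and by
Cayley–Hamilton `g` satisfies every polynomial identity that `χ` divides. Over `F = 𝔽_q` there are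
three cases. If `χ` has two distinct roots in `F`, both are roots of `X^(q-1) - 1`. If it has a
double root `a`, then `(g - a)² = 0`, so `g^p = a^p` is scalar. If `χ` is irreducible, a root `x`
in `F[X]/(χ)` satisfies `x^q ∈ {x, x⁻¹}`; `x^q = x` would make `χ` divide `X^q - X`, which splits
over `F`, so `x^(q+1) = 1` and `χ ∣ X^(q+1) - 1`. Whichever power of `y` is central kills the
corresponding commutator in the word.
-/

open Polynomial
open scoped commutatorElement

section Quadratic

variable {F : Type*} [Field F]

lemma X_sq_sub_C_mul_X_add_one_eq_mul {t a : F} (ha : a ^ 2 - t * a + 1 = 0) :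
    (X ^ 2 - C t * X + 1 : F[X]) = (X - C a) * (X - C a⁻¹) := by
  have ha0 : a ≠ 0 := by rintro rfl; simp at ha
  have ht : C t = C a + C a⁻¹ := by
    rw [← C_add]; congr 1; field_simp; linear_combination -ha
  have hinv : C a * C a⁻¹ = (1 : F[X]) := by rw [← C_mul, mul_inv_cancel₀ ha0, C_1]
  linear_combination (-X) * ht - hinv

variable [Fintype F]

lemma FiniteField.X_sub_C_mul_X_sub_C_dvd_X_pow_card_sub_one_sub_one {a b : F}
    (ha : a ≠ 0) (hb : b ≠ 0) (hab : a ≠ b) :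
    (X - C a) * (X - C b) ∣ (X ^ (Fintype.card F - 1) - 1 : F[X]) := by
  have hroot {c : F} (hc : c ≠ 0) : X - C c ∣ (X ^ (Fintype.card F - 1) - 1 : F[X]) := by
    simp [dvd_iff_isRoot, FiniteField.pow_card_sub_one_eq_one c hc]
  exact (isCoprime_X_sub_C_of_isUnit_sub (sub_ne_zero.mpr hab).isUnit).mul_dvd
    (hroot ha) (hroot hb)

lemma FiniteField.natDegree_le_one_of_irreducible_of_dvd {f : F[X]} (hf : Irreducible f)
    (hdvd : f ∣ X ^ Fintype.card F - X) : f.natDegree ≤ 1 := by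
  have hq : 1 < Fintype.card F := Fintype.one_lt_card
  have hsplit : (X ^ Fintype.card F - X : F[X]).Splits := by
    rw [splits_iff_card_roots, FiniteField.roots_X_pow_card_sub_X,
      FiniteField.X_pow_card_sub_X_natDegree_eq F hq]
    rfl
  exact Splits.natDegree_le_one_of_irreducible
    (hsplit.of_dvd (FiniteField.X_pow_card_sub_X_ne_zero F hq) hdvd) hf

lemma FiniteField.X_sq_sub_C_mul_X_add_one_dvd_X_pow_card_add_one_sub_one {t : F}
    (hirr : Irreducible (X ^ 2 - C t * X + 1 : F[X])) :
    (X ^ 2 - C t * X + 1 : F[X]) ∣ X ^ (Fintype.card F + 1) - 1 := by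
  set χ : F[X] := X ^ 2 - C t * X + 1
  have := Fact.mk hirr
  have hdvd_iff (P : F[X]) : χ ∣ P ↔ aeval (AdjoinRoot.root χ) P = 0 := by
    rw [AdjoinRoot.aeval_eq, AdjoinRoot.mk_eq_zero]
  set x := AdjoinRoot.root χ
  have hx : x ^ 2 - algebraMap F _ t * x + 1 = 0 := by
    simpa [χ] using (hdvd_iff χ).mp dvd_rfl
  -- `χ(X^q) = χ^q` over `F`, so `x^q` is again a root of `χ`
  have hxq : (x ^ Fintype.card F) ^ 2 - algebraMap F _ t * x ^ Fintype.card F + 1 = 0 := by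
    have := (hdvd_iff _).mp (dvd_pow_self χ (Fintype.card_ne_zero (α := F)))
    rw [← FiniteField.expand_card, expand_aeval] at this
    simpa [χ] using this
  have hfrob : (x ^ Fintype.card F - x) * (x ^ Fintype.card F + x - algebraMap F _ t) = 0 := by
    linear_combination hxq - hx
  rcases mul_eq_zero.mp hfrob with hfix | hconj
  · have hdvd : χ ∣ X ^ Fintype.card F - X := (hdvd_iff _).mpr (by simpa [sub_eq_zero] using hfix)
    have hle := FiniteField.natDegree_le_one_of_irreducible_of_dvd hirr hdvd
    have hdeg : χ.natDegree = 2 := by simp only [χ]; compute_degree!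
    omega
  · rw [hdvd_iff, map_sub, map_pow, aeval_X, map_one, pow_succ]
    linear_combination x * hconj - hx

lemma FiniteField.X_sq_sub_C_mul_X_add_one_dvd_or_eq_sq (t : F) :
    (X ^ 2 - C t * X + 1 : F[X]) ∣ X ^ (Fintype.card F - 1) - 1 ∨
      (X ^ 2 - C t * X + 1 : F[X]) ∣ X ^ (Fintype.card F + 1) - 1 ∨
      ∃ a : F, (X ^ 2 - C t * X + 1 : F[X]) = (X - C a) ^ 2 := by
  by_cases hroot : ∃ a : F, a ^ 2 - t * a + 1 = 0
  · obtain ⟨a, ha⟩ := hroot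
    rw [X_sq_sub_C_mul_X_add_one_eq_mul ha]
    by_cases haa : a = a⁻¹
    · exact Or.inr (Or.inr ⟨a, by rw [← haa, sq]⟩)
    · have ha0 : a ≠ 0 := by rintro rfl; simp at ha
      exact Or.inl (FiniteField.X_sub_C_mul_X_sub_C_dvd_X_pow_card_sub_one_sub_one ha0
        (inv_ne_zero ha0) haa)
  · refine Or.inr (Or.inl (FiniteField.X_sq_sub_C_mul_X_add_one_dvd_X_pow_card_add_one_sub_one ?_))
    have hmonic : (X ^ 2 - C t * X + 1 : F[X]).Monic := by monicity!
    have hdeg : (X ^ 2 - C t * X + 1 : F[X]).natDegree = 2 := by compute_degree!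
    rw [irreducible_iff_roots_eq_zero_of_degree_le_three (by omega) (by omega),
      Multiset.eq_zero_iff_forall_notMem]
    intro a ha
    rw [mem_roots hmonic.ne_zero, IsRoot] at ha
    exact hroot ⟨a, by simpa using ha⟩

end Quadratic

lemma add_pow_char_of_commute_of_pow_eq_zero {A : Type*} [Ring A] (p : ℕ) [Fact p.Prime]
    [CharP A p] {x y : A} {k : ℕ} (h : Commute x y) (hk : k ≤ p) (hy : y ^ k = 0) :
    (x + y) ^ p = x ^ p := by
  rw [add_pow_char_of_commute p h, pow_eq_zero_of_le hk hy, add_zero]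

namespace Matrix

variable {n R : Type*} [Fintype n] [DecidableEq n] [CommRing R]

lemma pow_eq_one_of_charpoly_dvd {M : Matrix n n R} {k : ℕ} (h : M.charpoly ∣ X ^ k - 1) :
    M ^ k = 1 := by
  obtain ⟨P, hP⟩ := h
  have := congrArg (aeval M) hP
  rwa [map_mul, aeval_self_charpoly, zero_mul, map_sub, map_pow, aeval_X, map_one,
    sub_eq_zero] at this

lemma pow_char_eq_scalar_of_charpoly_eq_pow [Nonempty n] (p : ℕ) [Fact p.Prime] [CharP R p]
    {M : Matrix n n R} {a : R} {k : ℕ} (hk : k ≤ p) (h : M.charpoly = (X - C a) ^ k) :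
    M ^ p = scalar n (a ^ p) := by
  have hN : (M - scalar n a) ^ k = 0 := by
    have := aeval_self_charpoly M
    rwa [h, map_pow, map_sub, aeval_X, aeval_C] at this
  have := add_pow_char_of_commute_of_pow_eq_zero p
    ((scalar_commute a (Commute.all a) M).sub_right (Commute.refl (scalar n a))) hk hN
  rwa [add_sub_cancel, ← map_pow] at this

lemma charpoly_fin_two_of_det_eq_one [Nontrivial R] {M : Matrix (Fin 2) (Fin 2) R}
    (h : M.det = 1) : M.charpoly = X ^ 2 - C M.trace * X + 1 := by
  rw [charpoly_fin_two, h, C_1]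

end Matrix

namespace Matrix.SpecialLinearGroup

variable {F : Type*} [Field F] [Fintype F]

theorem pow_card_sub_one_eq_one_or_pow_card_add_one_eq_one_or_pow_ringChar_mem_center
    (g : SpecialLinearGroup (Fin 2) F) :
    g ^ (Fintype.card F - 1) = 1 ∨ g ^ (Fintype.card F + 1) = 1 ∨
      g ^ ringChar F ∈ Subgroup.center (SpecialLinearGroup (Fin 2) F) := by
  have hχ := charpoly_fin_two_of_det_eq_one g.prop
  rcases FiniteField.X_sq_sub_C_mul_X_add_one_dvd_or_eq_sq (g : Matrix (Fin 2) (Fin 2) F).trace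
    with h | h | ⟨a, h⟩
  · exact Or.inl (Subtype.ext (by simpa using pow_eq_one_of_charpoly_dvd (hχ ▸ h)))
  · exact Or.inr (Or.inl (Subtype.ext (by simpa using pow_eq_one_of_charpoly_dvd (hχ ▸ h))))
  · have hp := Fact.mk (CharP.char_is_prime F (ringChar F))
    have hpow := pow_char_eq_scalar_of_charpoly_eq_pow (ringChar F) hp.out.two_le (hχ.trans h)
    refine Or.inr (Or.inr (mem_center_iff.mpr ⟨a ^ ringChar F, ?_, by rw [coe_pow, hpow]⟩))
    simpa [hpow] using (g ^ ringChar F).prop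

end Matrix.SpecialLinearGroup

lemma commutatorElement_eq_one_of_pow_mem_center {G : Type*} [Group G] {a b c : ℕ} (x y : G)
    (h : y ^ a ∈ Subgroup.center G ∨ y ^ b ∈ Subgroup.center G ∨ y ^ c ∈ Subgroup.center G) :
    ⁅⁅⁅x, y ^ c⁆, (y ^ a)⁻¹⁆, y ^ b⁆ = 1 := by
  have central_eq_one {z : G} (hz : z ∈ Subgroup.center G) (w : G) : ⁅w, z⁆ = 1 :=
    commutatorElement_eq_one_iff_commute.mpr (Subgroup.mem_center_iff.mp hz w)
  rcases h with h | h | h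
  · rw [central_eq_one (Subgroup.inv_mem _ h), commutatorElement_one_left]
  · exact central_eq_one h _
  · rw [central_eq_one h, commutatorElement_one_left, commutatorElement_one_left]

/-- For `q = p^e` (so `p = ringChar F`), every `g ∈ SL₂(q)` satisfies that one
of `g^(q-1)`, `g^(q+1)`, `g^p` is central; consequently
`v(x,y) = [[[x, y^p], y^{-(q-1)}], y^{q+1}]` is a law for `SL₂(q)`. -/
theorem stmt13 {F : Type*} [Field F] [Fintype F] :
    (∀ g : Matrix.SpecialLinearGroup (Fin 2) F,
        g ^ (Fintype.card F - 1) ∈ Subgroup.center (Matrix.SpecialLinearGroup (Fin 2) F) ∨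
        g ^ (Fintype.card F + 1) ∈ Subgroup.center (Matrix.SpecialLinearGroup (Fin 2) F) ∨
        g ^ ringChar F ∈ Subgroup.center (Matrix.SpecialLinearGroup (Fin 2) F)) ∧
    ∀ x y : Matrix.SpecialLinearGroup (Fin 2) F,
      ⁅⁅⁅x, y ^ ringChar F⁆, (y ^ (Fintype.card F - 1))⁻¹⁆, y ^ (Fintype.card F + 1)⁆ = 1 := by
  have trichotomy (g : Matrix.SpecialLinearGroup (Fin 2) F) :
      g ^ (Fintype.card F - 1) ∈ Subgroup.center (Matrix.SpecialLinearGroup (Fin 2) F) ∨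
        g ^ (Fintype.card F + 1) ∈ Subgroup.center (Matrix.SpecialLinearGroup (Fin 2) F) ∨
        g ^ ringChar F ∈ Subgroup.center (Matrix.SpecialLinearGroup (Fin 2) F) := by
    rcases g.pow_card_sub_one_eq_one_or_pow_card_add_one_eq_one_or_pow_ringChar_mem_center
      with h | h | h
    · exact Or.inl (h ▸ Subgroup.one_mem _)
    · exact Or.inr (Or.inl (h ▸ Subgroup.one_mem _))
    · exact Or.inr (Or.inr h)
  exact ⟨trichotomy, fun x y ↦ commutatorElement_eq_one_of_pow_mem_center x y (trichotomy y)⟩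
end

section
/- Let p be a prime, q = p^e, and let c be an invertible semilinear map on V = F_q^n which is semilinear with respect to the field automorphism x ↦ x^{p^m}, where 1 ≤ m ≤ e. Then the induced map on the projective space P(V) has at most (p^{m'n} - 1)/(p^{m'} - 1) fixed points, where m' = gcd(e, m). -/
/-!
Write `σ = (· ^ p ^ m)` and `k` for its fixed field, which has at most `p ^ gcd(e, m)` elements.
A fixed line is spanned by an eigenvector `c w = μ w`, `μ ≠ 0`; rescaling `w` by `a` replaces `μ`
by `μ σ(a) / a`, so after fixing a representative `μ` of each class of `Fˣ` modulo
`{σ(a) / a}`, every fixed line contains exactly `|k| - 1` nonzero vectors of one of the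
`k`-subspaces `E_μ = {x | c x = μ x}`. The key point is an Artin-type independence: `k`-bases of
the `E_μ`, for pairwise distinct classes, together form an `F`-independent family, so
`∑ dim_k E_μ ≤ n`. Counting nonzero vectors then gives
`#lines * (|k| - 1) ≤ ∑ (|k| ^ dim E_μ - 1) ≤ |k| ^ n - 1`.
-/

open Module

section Twisted

variable {F V : Type*} [Field F] [AddCommGroup V] [Module F V] {σ : F →+* F}

abbrev fixedSubfield (σ : F →+* F) : Subfield F := σ.eqLocusField (RingHom.id F)

def twistedEigenspace (f : V →ₛₗ[σ] V) (μ : F) : Submodule (fixedSubfield σ) V where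
  carrier := {x | f x = μ • x}
  add_mem' {x y} hx hy := by simp_all [smul_add]
  zero_mem' := by simp
  smul_mem' u x hx := by
    have hu : σ u = u := u.2
    change f ((u : F) • x) = μ • (u : F) • x
    rw [map_smulₛₗ, hx, hu, smul_comm]

theorem mem_twistedEigenspace {f : V →ₛₗ[σ] V} {μ : F} {x : V} :
    x ∈ twistedEigenspace f μ ↔ f x = μ • x := Iff.rfl

theorem smul_mem_twistedEigenspace {f : V →ₛₗ[σ] V} {μ : F} {w : V} (hw : f w = μ • w) {a : F}
    (ha : a ≠ 0) : a • w ∈ twistedEigenspace f (μ * (σ a / a)) := by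
  rw [mem_twistedEigenspace, map_smulₛₗ, hw, smul_smul, smul_smul]
  congr 1
  field_simp

theorem exists_eigenvector_of_finrank_eq_one {f : V →ₛₗ[σ] V} (hf : Function.Injective f)
    {L : Submodule F V} (hL : finrank F L = 1) (hfL : ∀ v ∈ L, f v ∈ L) :
    ∃ w ∈ L, w ≠ 0 ∧ ∃ μ : Fˣ, f w = (μ : F) • w := by
  obtain ⟨w, hwL, hw0⟩ := L.exists_mem_ne_zero_of_ne_bot (by rintro rfl; simp at hL)
  have hspan := eq_span_singleton_of_mem_of_finrank_eq_one hL hwL hw0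
  obtain ⟨μ, hμ⟩ := Submodule.mem_span_singleton.1 (hspan ▸ hfL w hwL)
  have hμ0 : μ ≠ 0 := by
    rintro rfl
    exact hw0 (hf (by rw [← hμ, zero_smul, map_zero]))
  exact ⟨w, hwL, hw0, Units.mk0 μ hμ0, hμ.symm⟩

theorem linearIndependent_of_twistedEigenvectors (f : V →ₛₗ[σ] V) {ι : Type*} {v : ι → V}
    {μ : ι → F} (hv : ∀ i, f (v i) = μ i • v i) (hμ0 : ∀ i, μ i ≠ 0)
    (hμ : ∀ i j (a : F), a ≠ 0 → μ i * a = μ j * σ a → μ i = μ j)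
    (hk : ∀ i, LinearIndepOn (fixedSubfield σ) v {j | μ j = μ i}) :
    LinearIndependent F v := by
  classical
  rw [linearIndependent_iff']
  intro s
  induction s using Finset.strongInduction with
  | H s ih =>
  intro g hg i₀ hi₀
  by_contra hgi₀
  -- `g'` is the relation `σ(g i₀) μ i₀ • g - g i₀ • f(g)`, whose `i₀`-coefficient vanishes
  set g' : ι → F := fun i => σ (g i₀) * μ i₀ * g i - g i₀ * (σ (g i) * μ i)
  have hg' : ∑ i ∈ s.erase i₀, g' i • v i = 0 := by
    rw [Finset.sum_erase _ (by simp [g', mul_comm, mul_left_comm])]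
    have hfg : ∑ i ∈ s, σ (g i) • μ i • v i = 0 := by
      simpa [map_sum, map_smulₛₗ, hv] using congrArg f hg
    simp only [g', sub_smul, Finset.sum_sub_distrib, mul_smul, ← Finset.smul_sum, hg, hfg,
      smul_zero, sub_self]
  have hrel : ∀ i ∈ s, σ (g i₀) * μ i₀ * g i = g i₀ * (σ (g i) * μ i) := by
    intro i hi
    by_cases hii : i = i₀
    · subst hii; ring
    · exact sub_eq_zero.mp
        (ih _ (Finset.erase_ssubset hi₀) g' hg' i (Finset.mem_erase.2 ⟨hii, hi⟩))
  have hσ₀ : σ (g i₀) ≠ 0 := (map_ne_zero σ).2 hgi₀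
  have hμi : ∀ i ∈ s, g i ≠ 0 → μ i = μ i₀ := by
    intro i hi hgi
    have hσi : σ (g i) ≠ 0 := (map_ne_zero σ).2 hgi
    refine hμ i i₀ (g i₀ / g i) (div_ne_zero hgi₀ hgi) ?_
    rw [map_div₀]
    field_simp
    linear_combination -(hrel i hi)
  have hfix : ∀ i ∈ s, σ (g i / g i₀) = g i / g i₀ := by
    intro i hi
    by_cases hgi : g i = 0
    · simp [hgi]
    rw [map_div₀, div_eq_div_iff hσ₀ hgi₀]
    have := hrel i hi
    rw [hμi i hi hgi] at this
    apply mul_left_cancel₀ (hμ0 i₀)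
    linear_combination -this
  let h : ι → fixedSubfield σ := fun i =>
    if hi : i ∈ s then ⟨g i / g i₀, hfix i hi⟩ else 0
  have hsum : ∑ i ∈ s with μ i = μ i₀, h i • v i = 0 := by
    have hsupp : ∀ i ∈ s, g i • v i ≠ 0 → μ i = μ i₀ := fun i hi hne =>
      hμi i hi (left_ne_zero_of_smul hne)
    calc ∑ i ∈ s with μ i = μ i₀, h i • v i
        = (g i₀)⁻¹ • ∑ i ∈ s with μ i = μ i₀, g i • v i := by
          rw [Finset.smul_sum]
          refine Finset.sum_congr rfl fun i hi => ?_
          rw [Finset.mem_filter] at hi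
          simp [h, hi.1, Subfield.smul_def, smul_smul, div_eq_inv_mul]
      _ = 0 := by rw [Finset.sum_filter_of_ne hsupp, hg, smul_zero]
  have := (linearIndepOn_iff'.1 (hk i₀)) _ h (by simp) hsum i₀ (by simp [hi₀])
  simpa [h, hi₀, hgi₀] using congrArg Subtype.val this

theorem sum_finrank_twistedEigenspace_le [FiniteDimensional F V] (f : V →ₛₗ[σ] V) {Q : Type*}
    [Fintype Q] {μ : Q → F} (hμ0 : ∀ q, μ q ≠ 0)
    (hμ : ∀ q q' (a : F), a ≠ 0 → μ q * a = μ q' * σ a → q = q')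
    [∀ q, FiniteDimensional (fixedSubfield σ) (twistedEigenspace f (μ q))] :
    ∑ q, finrank (fixedSubfield σ) (twistedEigenspace f (μ q)) ≤ finrank F V := by
  let d q := finrank (fixedSubfield σ) (twistedEigenspace f (μ q))
  let b q : Basis (Fin (d q)) _ _ := finBasis (fixedSubfield σ) (twistedEigenspace f (μ q))
  have hli : LinearIndependent F fun x : (q : Q) × Fin (d q) => (b x.1 x.2 : V) := by
    refine linearIndependent_of_twistedEigenvectors f (μ := fun x => μ x.1)
      (fun x => (b x.1 x.2).2) (fun x => hμ0 x.1) (fun x y a ha h => by rw [hμ x.1 y.1 a ha h])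
      fun x => ?_
    have hfib : {y : (q : Q) × Fin (d q) | μ y.1 = μ x.1} ⊆ Set.range (Sigma.mk x.1) := by
      rintro ⟨q, j⟩ hq
      obtain rfl : q = x.1 := hμ q x.1 1 one_ne_zero (by simpa using hq)
      exact ⟨j, rfl⟩
    refine LinearIndepOn.mono ?_ hfib
    rw [linearIndepOn_range_iff sigma_mk_injective]
    exact ((b x.1).linearIndependent.map' _ (twistedEigenspace f (μ x.1)).ker_subtype :)
  simpa only [Fintype.card_sigma, Fintype.card_fin] using hli.fintype_card_le_finrank

variable (σ) in
/-- Rescaling an eigenvector by `a` multiplies its eigenvalue by `twistHom σ a`. -/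
def twistHom : Fˣ →* Fˣ := Units.map (σ : F →* F) / MonoidHom.id Fˣ

variable (σ) in
abbrev TwistClass := Fˣ ⧸ (twistHom σ).range

@[simp]
theorem coe_twistHom (a : Fˣ) : (twistHom σ a : F) = σ a / a := by
  simp [twistHom, div_eq_mul_inv]

theorem TwistClass.eq_of_out_mul_eq {q q' : TwistClass σ} {a : F} (ha : a ≠ 0)
    (h : (q.out : F) * a = q'.out * σ a) : q = q' := by
  rw [← q.out_eq', ← q'.out_eq', QuotientGroup.eq]
  refine ⟨(Units.mk0 a ha)⁻¹, Units.ext ?_⟩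
  have hσa : σ a ≠ 0 := (map_ne_zero σ).2 ha
  simp only [coe_twistHom, Units.val_inv_eq_inv_val, Units.val_mk0, map_inv₀, Units.val_mul]
  field_simp
  linear_combination h

theorem TwistClass.exists_out_mk_eq (x : Fˣ) :
    ∃ a : Fˣ, ((QuotientGroup.mk x : TwistClass σ).out : F) = x * (σ a / a) := by
  obtain ⟨⟨_, a, rfl⟩, h⟩ := QuotientGroup.mk_out_eq_mul (twistHom σ).range x
  exact ⟨a, by rw [h, Units.val_mul, coe_twistHom]⟩

theorem exists_mem_twistedEigenspace_out {f : V →ₛₗ[σ] V} (hf : Function.Injective f)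
    {L : Submodule F V} (hL : finrank F L = 1) (hfL : ∀ v ∈ L, f v ∈ L) :
    ∃ (q : TwistClass σ) (w : V), w ∈ L ∧ w ≠ 0 ∧ w ∈ twistedEigenspace f (q.out : F) := by
  obtain ⟨w, hwL, hw0, μ, hμ⟩ := exists_eigenvector_of_finrank_eq_one hf hL hfL
  obtain ⟨a, ha⟩ := TwistClass.exists_out_mk_eq (σ := σ) μ
  refine ⟨QuotientGroup.mk μ, (a : F) • w, L.smul_mem _ hwL, smul_ne_zero a.ne_zero hw0, ?_⟩
  rw [ha]
  exact smul_mem_twistedEigenspace hμ a.ne_zero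

theorem Finset.sum_pow_sub_one_le {ι : Type*} (s : Finset ι) {K : ℕ} (hK : 1 ≤ K)
    (d : ι → ℕ) : ∑ i ∈ s, (K ^ d i - 1) ≤ K ^ ∑ i ∈ s, d i - 1 := by
  classical
  induction s using Finset.induction_on with
  | empty => simp
  | insert a s ha ih =>
    rw [Finset.sum_insert ha, Finset.sum_insert ha, pow_add]
    have h₁ := Nat.one_le_pow (d a) K hK
    have h₂ := Nat.one_le_pow (∑ i ∈ s, d i) K hK
    have : K ^ d a + K ^ ∑ i ∈ s, d i ≤ K ^ d a * K ^ ∑ i ∈ s, d i + 1 := by nlinarith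
    omega

theorem card_fixedLines_mul_le [Finite F] [FiniteDimensional F V] {f : V →ₛₗ[σ] V}
    (hf : Function.Injective f) :
    Nat.card {L : Submodule F V // finrank F L = 1 ∧ ∀ v ∈ L, f v ∈ L} *
      (Nat.card (fixedSubfield σ) - 1) ≤ Nat.card (fixedSubfield σ) ^ finrank F V - 1 := by
  classical
  have : Finite V := Module.finite_of_finite F
  have : Fintype (TwistClass σ) := Fintype.ofFinite _
  let E (q : TwistClass σ) := twistedEigenspace f (q.out : F)
  let K := Nat.card (fixedSubfield σ)
  let S := {L : Submodule F V // finrank F L = 1 ∧ ∀ v ∈ L, f v ∈ L}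
  choose q w hwL hw0 hwE using fun L : S => exists_mem_twistedEigenspace_out hf L.2.1 L.2.2
  let Φ (Lu : S × (fixedSubfield σ)ˣ) : (q : TwistClass σ) × {x : E q // x ≠ 0} :=
    ⟨q Lu.1, ⟨Lu.2 • ⟨w Lu.1, hwE Lu.1⟩, smul_ne_zero Lu.2.ne_zero (by simpa using hw0 Lu.1)⟩⟩
  have hΦ : Function.Injective Φ := by
    refine Function.Injective.of_comp (f := fun x => ((x.2 : E x.1) : V)) ?_
    rintro ⟨L, u⟩ ⟨L', u'⟩ h
    replace h : ((u : fixedSubfield σ) : F) • w L = ((u' : fixedSubfield σ) : F) • w L' := h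
    have hspan {L : S} {a : (fixedSubfield σ)ˣ} :
        L.1 = F ∙ (((a : fixedSubfield σ) : F) • w L) :=
      eq_span_singleton_of_mem_of_finrank_eq_one L.2.1 (L.1.smul_mem _ (hwL L))
        (smul_ne_zero (by simp) (hw0 L))
    obtain rfl : L = L' := Subtype.ext (by rw [hspan (a := u), hspan (a := u'), h])
    rw [Units.ext (Subtype.ext (smul_left_injective F (hw0 L) h))]
  have hcardE (q : TwistClass σ) :
      Nat.card {x : E q // x ≠ 0} = K ^ finrank (fixedSubfield σ) (E q) - 1 := by
    have := Nat.card_congr (Equiv.optionSubtypeNe (0 : E q))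
    rw [Finite.card_option, natCard_eq_pow_finrank (K := fixedSubfield σ) (V := E q)] at this
    exact Nat.eq_sub_of_add_eq this
  have hsum := sum_finrank_twistedEigenspace_le f (μ := fun q : TwistClass σ => (q.out : F))
    (fun q => q.out.ne_zero) fun q q' a ha h => TwistClass.eq_of_out_mul_eq ha h
  calc Nat.card S * (K - 1) = Nat.card (S × (fixedSubfield σ)ˣ) := by
        rw [Nat.card_prod, Nat.card_units]
    _ ≤ Nat.card ((q : TwistClass σ) × {x : E q // x ≠ 0}) :=
        Nat.card_le_card_of_injective Φ hΦ
    _ = ∑ q, (K ^ finrank (fixedSubfield σ) (E q) - 1) := by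
        rw [Nat.card_sigma]; simp only [hcardE]
    _ ≤ K ^ ∑ q, finrank (fixedSubfield σ) (E q) - 1 :=
        Finset.sum_pow_sub_one_le _ Nat.card_pos _
    _ ≤ K ^ finrank F V - 1 := Nat.sub_le_sub_right (Nat.pow_le_pow_right Nat.card_pos hsum) 1

end Twisted

theorem card_fixedSubfield_iterateFrobenius_le {F : Type*} [Field F] [Fintype F] {p e : ℕ}
    [Fact p.Prime] [CharP F p] (hcard : Fintype.card F = p ^ e) (m : ℕ) :
    Nat.card (fixedSubfield (iterateFrobenius F p m)) ≤ p ^ Nat.gcd e m := by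
  classical
  have hroot : ∀ x ∈ fixedSubfield (iterateFrobenius F p m), x ^ p ^ Nat.gcd e m = x := by
    intro x hx
    have he : Function.IsPeriodicPt (frobenius F p) e x := by
      rw [Function.IsPeriodicPt, Function.IsFixedPt, iterate_frobenius, ← hcard,
        FiniteField.pow_card]
    have hm : Function.IsPeriodicPt (frobenius F p) m x := by
      rwa [Function.IsPeriodicPt, Function.IsFixedPt, iterate_frobenius]
    simpa only [Function.IsPeriodicPt, Function.IsFixedPt, iterate_frobenius] using he.gcd hm
  have he : e ≠ 0 := by
    rintro rfl
    exact (Fintype.one_lt_card (α := F)).ne' (by simpa using hcard)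
  have hlt : 1 < p ^ Nat.gcd e m :=
    Nat.one_lt_pow (Nat.gcd_ne_zero_left he) (Fact.out : p.Prime).one_lt
  rw [← FiniteField.X_pow_card_sub_X_natDegree_eq F hlt, ← SetLike.coe_sort_coe,
    Nat.card_eq_card_toFinset]
  refine Polynomial.card_le_degree_of_subset_roots fun x hx => ?_
  have hx' : x ∈ fixedSubfield (iterateFrobenius F p m) := by simpa using hx
  rw [Polynomial.mem_roots', Polynomial.IsRoot, Polynomial.eval_sub, Polynomial.eval_pow,
    Polynomial.eval_X, hroot x hx', sub_self]
  exact ⟨FiniteField.X_pow_card_sub_X_ne_zero F hlt, rfl⟩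

theorem Nat.pow_sub_one_div_sub_one_le {a b : ℕ} (ha : 2 ≤ a) (hab : a ≤ b) (n : ℕ) :
    (a ^ n - 1) / (a - 1) ≤ (b ^ n - 1) / (b - 1) := by
  rw [← Nat.geomSum_eq ha, ← Nat.geomSum_eq (ha.trans hab)]
  exact Finset.sum_le_sum fun i _ => Nat.pow_le_pow_left hab i

theorem stmt14_general {p : ℕ} [Fact p.Prime] {e m n : ℕ}
    {F : Type*} [Field F] [Fintype F] (hcard : Fintype.card F = p ^ e)
    {V : Type*} [AddCommGroup V] [Module F V] [FiniteDimensional F V]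
    (hdim : Module.finrank F V = n)
    (c : V → V) (hbij : Function.Bijective c)
    (hadd : ∀ u v, c (u + v) = c u + c v)
    (hsemi : ∀ (a : F) (v : V), c (a • v) = a ^ p ^ m • c v) :
    Nat.card {L : Submodule F V // Module.finrank F ↥L = 1 ∧ ∀ v ∈ L, c v ∈ L} ≤
      (p ^ (Nat.gcd e m * n) - 1) / (p ^ Nat.gcd e m - 1) := by
  have := charP_of_card_eq_prime_pow hcard
  let f : V →ₛₗ[iterateFrobenius F p m] V :=
    { toFun := c, map_add' := hadd, map_smul' := hsemi }
  have hK := card_fixedSubfield_iterateFrobenius_le hcard m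
  have hK₂ : 2 ≤ Nat.card (fixedSubfield (iterateFrobenius F p m)) := Finite.one_lt_card
  have hlines := card_fixedLines_mul_le (f := f) hbij.injective
  rw [hdim] at hlines
  rw [pow_mul]
  exact ((Nat.le_div_iff_mul_le (by omega)).2 hlines).trans
    (Nat.pow_sub_one_div_sub_one_le hK₂ hK n)

/-- Let `q = p^e` and let `c` be an invertible map on an `n`-dimensional
`F_q`-vector space `V` which is semilinear with respect to `x ↦ x^(p^m)` (`1 ≤ m ≤ e`).
Then the induced map on the projective space `P(V)` has at most
`(p^(m'n) - 1)/(p^(m') - 1)` fixed points (lines `L` with `c(L) = L`), where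
`m' = gcd(e, m)`. -/
theorem stmt14 {p : ℕ} [Fact p.Prime] {e m n : ℕ} (hm1 : 1 ≤ m) (hme : m ≤ e)
    {F : Type*} [Field F] [Fintype F] (hcard : Fintype.card F = p ^ e)
    {V : Type*} [AddCommGroup V] [Module F V] [FiniteDimensional F V]
    (hdim : Module.finrank F V = n)
    (c : V → V) (hbij : Function.Bijective c)
    (hadd : ∀ u v, c (u + v) = c u + c v)
    (hsemi : ∀ (a : F) (v : V), c (a • v) = a ^ p ^ m • c v) :
    Nat.card {L : Submodule F V // Module.finrank F ↥L = 1 ∧ ∀ v ∈ L, c v ∈ L} ≤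
      (p ^ (Nat.gcd e m * n) - 1) / (p ^ Nat.gcd e m - 1) :=
  stmt14_general hcard hdim c hbij hadd hsemi
end

section
/- Let R be a commutative ring of characteristic ≠ 2 and m ≥ 2. Let g₀ = diag(J, 1_{m-2}, J, 1_{m-2}) ∈ Sp_{2m}(R) where J = [[0,1],[1,0]], and let k = 1_{2m} + e_{1,m+1} be the standard symplectic transvection. Then for every x ∈ Sp_{2m}(R), the elements g₀^x k g₀^x and k commute; equivalently, w(x) = [g₀^x k g₀^x, k] is a mixed identity of length 8 for Sp_{2m}(R). -/
/-!
The conjugate `g = x⁻¹ g₀ x` is again a symplectic involution, so `g Ω gᵀ = Ω` becomes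
`Ω gᵀ = g Ω`; comparing the `(m+1, m+1)` entries gives `g_{m+1,1} = -g_{m+1,1}`, hence
`g_{m+1,1} = 0` in characteristic `≠ 2`. With `k = 1 + e`, `e = e_{1,m+1}`, this says `e g e = 0`.
Then `g k g = 1 + g e g` and `g e g` annihilates `e` on both sides, so `g k g` commutes with `k`.
-/

/-- The Gram matrix `Ω = [[0, 1_m], [-1_m, 0]]` of the standard alternating form
`f(u,v) = u Ω vᵀ` on `R^{2m}` (rows indexed by `Fin m ⊕ Fin m`). -/
def OmegaMat (m : ℕ) (R : Type*) [CommRing R] :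
    Matrix (Fin m ⊕ Fin m) (Fin m ⊕ Fin m) R :=
  Matrix.fromBlocks 0 1 (-1) 0

open Matrix Equiv

lemma commute_conj_one_add_of_mul_mul_eq_zero {A : Type*} [Ring A] {g e : A}
    (hg : g * g = 1) (he : e * g * e = 0) : Commute (g * (1 + e) * g) (1 + e) := by
  have hconj : g * (1 + e) * g = 1 + g * e * g := by rw [mul_add, mul_one, add_mul, hg]
  have hleft : g * e * g * e = 0 := by simp only [mul_assoc] at he ⊢; rw [he, mul_zero]
  have hright : e * (g * e * g) = 0 := by rw [← mul_assoc, ← mul_assoc, he, zero_mul]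
  rw [hconj, Commute, SemiconjBy]
  simp only [add_mul, mul_add, one_mul, mul_one, hleft, hright, add_zero]
  abel

section

variable {l R : Type*} [Fintype l] [DecidableEq l] [CommRing R]

lemma permMatrix_sumCongr_mem_symplecticGroup (σ : Perm l) :
    (Perm.sumCongr σ σ).permMatrix R ∈ symplecticGroup l R := by
  rw [SymplecticGroup.mem_iff, transpose_permMatrix, Perm.permMatrix, Perm.permMatrix,
    PEquiv.toMatrix_toPEquiv_mul, PEquiv.mul_toMatrix_toPEquiv]
  ext (i | i) (j | j) <;> simp [J, one_apply, Perm.inv_def]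

lemma one_add_single_inl_inr_mem_symplecticGroup (i : l) (c : R) :
    1 + single (Sum.inl i) (Sum.inr i) c ∈ symplecticGroup l R := by
  rw [SymplecticGroup.mem_iff]
  ext (a | a) (b | b) <;>
    simp [J, mul_apply, Fintype.sum_sum_type, single, one_apply, add_mul, mul_add, ite_and,
      Finset.sum_ite_eq]
  split_ifs <;> simp_all

lemma apply_inr_inl_eq_zero_of_mul_self_eq_one (h2 : ∀ x : R, 2 * x = 0 → x = 0)
    {g : Matrix (l ⊕ l) (l ⊕ l) R} (hg : g ∈ symplecticGroup l R) (hgg : g * g = 1) (i : l) :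
    g (Sum.inr i) (Sum.inl i) = 0 := by
  have hcomm : J l R * gᵀ = g * J l R := by
    calc J l R * gᵀ = g * g * J l R * gᵀ := by rw [hgg, Matrix.one_mul]
      _ = g * (g * J l R * gᵀ) := by simp only [Matrix.mul_assoc]
      _ = g * J l R := by rw [SymplecticGroup.mem_iff.mp hg]
  have hneg : g (Sum.inr i) (Sum.inl i) = -g (Sum.inr i) (Sum.inl i) := by
    simpa [J, mul_apply, Fintype.sum_sum_type, one_apply] using
      congrFun (congrFun hcomm (Sum.inr i)) (Sum.inr i)
  exact h2 _ (by linear_combination hneg)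

lemma commute_conj_one_add_single_inl_inr (h2 : ∀ x : R, 2 * x = 0 → x = 0)
    {g : Matrix (l ⊕ l) (l ⊕ l) R} (hg : g ∈ symplecticGroup l R) (hgg : g * g = 1)
    (i : l) (c : R) :
    Commute (g * (1 + single (Sum.inl i) (Sum.inr i) c) * g)
      (1 + single (Sum.inl i) (Sum.inr i) c) := by
  refine commute_conj_one_add_of_mul_mul_eq_zero hgg ?_
  rw [single_mul_mul_single, apply_inr_inl_eq_zero_of_mul_self_eq_one h2 hg hgg, mul_zero,
    zero_mul, single_zero]

lemma inv_mul_mul_mem_symplecticGroup {x g : Matrix (l ⊕ l) (l ⊕ l) R}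
    (hx : x ∈ symplecticGroup l R) (hg : g ∈ symplecticGroup l R) :
    x⁻¹ * g * x ∈ symplecticGroup l R := by
  have hinv : x⁻¹ ∈ symplecticGroup l R :=
    SymplecticGroup.coe_inv' ⟨x, hx⟩ ▸ (⟨x, hx⟩⁻¹ : symplecticGroup l R).2
  exact mul_mem (mul_mem hinv hg) hx

lemma inv_mul_mul_mul_self_eq_one {n : Type*} [Fintype n] [DecidableEq n]
    {x g : Matrix n n R} (hx : IsUnit x.det) (hgg : g * g = 1) :
    x⁻¹ * g * x * (x⁻¹ * g * x) = 1 := by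
  simp only [Matrix.mul_assoc]
  rw [mul_nonsing_inv_cancel_left _ _ hx, ← Matrix.mul_assoc g, hgg, Matrix.one_mul,
    nonsing_inv_mul _ hx]

end

lemma omegaMat_eq_neg_J (m : ℕ) (R : Type*) [CommRing R] : OmegaMat m R = -J (Fin m) R := by
  rw [OmegaMat, J, fromBlocks_neg]
  simp

lemma mul_omegaMat_mul_transpose_eq_iff {m : ℕ} {R : Type*} [CommRing R]
    {A : Matrix (Fin m ⊕ Fin m) (Fin m ⊕ Fin m) R} :
    A * OmegaMat m R * Aᵀ = OmegaMat m R ↔ A ∈ symplecticGroup (Fin m) R := by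
  rw [SymplecticGroup.mem_iff, omegaMat_eq_neg_J, Matrix.mul_neg, Matrix.neg_mul, neg_inj]

/-- Let `R` be a commutative ring of characteristic `≠ 2` and `m ≥ 2`. Let
`g₀ = diag(J, 1_{m-2}, J, 1_{m-2})` (the permutation matrix swapping the first two
coordinates in each block, `J = [[0,1],[1,0]]`), and let `k = 1 + e_{1,m+1}` be the standard
symplectic transvection. Then `g₀, k ∈ Sp_{2m}(R)`, and for every `x ∈ Sp_{2m}(R)` the
elements `g₀^x k g₀^x` and `k` commute; i.e. `w(x) = [g₀^x k g₀^x, k]` is a mixed identity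
of length 8 for `Sp_{2m}(R)`. -/
theorem stmt16 {R : Type*} [CommRing R] (h2 : ∀ x : R, 2 * x = 0 → x = 0)
    {m : ℕ} (hm : 2 ≤ m)
    (g₀ k : Matrix (Fin m ⊕ Fin m) (Fin m ⊕ Fin m) R)
    (hg₀ : g₀ = Matrix.of fun i j =>
      if j = Sum.map (⇑(Equiv.swap (⟨0, by omega⟩ : Fin m) ⟨1, by omega⟩))
          (⇑(Equiv.swap (⟨0, by omega⟩ : Fin m) ⟨1, by omega⟩)) i then (1 : R) else 0)
    (hk : k = 1 + Matrix.single (Sum.inl (⟨0, by omega⟩ : Fin m))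
      (Sum.inr (⟨0, by omega⟩ : Fin m)) (1 : R)) :
    g₀ * OmegaMat m R * g₀.transpose = OmegaMat m R ∧
    k * OmegaMat m R * k.transpose = OmegaMat m R ∧
    ∀ x : Matrix (Fin m ⊕ Fin m) (Fin m ⊕ Fin m) R,
      x * OmegaMat m R * x.transpose = OmegaMat m R →
      Commute ((x⁻¹ * g₀ * x) * k * (x⁻¹ * g₀ * x)) k := by
  set s := Equiv.swap (⟨0, by omega⟩ : Fin m) ⟨1, by omega⟩
  replace hg₀ : g₀ = (Perm.sumCongr s s).permMatrix R := by
    rw [hg₀]; ext i j; simp [PEquiv.toMatrix_apply, eq_comm]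
  have hg₀_mem : g₀ ∈ symplecticGroup (Fin m) R :=
    hg₀ ▸ permMatrix_sumCongr_mem_symplecticGroup s
  have hg₀_sq : g₀ * g₀ = 1 := by
    rw [hg₀, ← permMatrix_mul, Perm.sumCongr_mul, Equiv.swap_mul_self, Perm.sumCongr_one,
      permMatrix_one]
  simp only [mul_omegaMat_mul_transpose_eq_iff]
  refine ⟨hg₀_mem, hk ▸ one_add_single_inl_inr_mem_symplecticGroup _ _, fun x hx => hk ▸ ?_⟩
  exact commute_conj_one_add_single_inl_inr h2 (inv_mul_mul_mem_symplecticGroup hx hg₀_mem)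
    (inv_mul_mul_mul_self_eq_one (SymplecticGroup.symplectic_det hx) hg₀_sq) _ _
end

section
/- Let q be a prime power and n = k + l with k ≥ 1. Let f be a hermitian form on V = F_{q²}^n (with respect to the involution α ↦ α^q) with radical of dimension l. Then the number of nonzero vectors v ∈ V with f(v,v) = 0 equals (q^k - (-1)^k)(q^{k-1} - (-1)^{k-1}) q^{2l} + q^{2l} - 1. -/
/-!
If every vector is isotropic then polarization gives `f u v = -f u v ^ q` for all `u, v`; scaling
`u` by some `x` with `x ^ q ≠ x` forces `f = 0`. So a nonzero form has an anisotropic vector `e`,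
and `V = K e ⊕ e^⊥` with `f (c • e + w) (c • e + w) = f e e * c ^ (q + 1) + f w w`. The norm
`c ↦ c ^ (q + 1)` maps `𝔽_{q²}` onto `𝔽_q`, with fibres of size `1` over `0` and `q + 1`
elsewhere. Hence, by induction on `k`, the number of `v` with `f v v = b` is `q ^ (2 * l)` times
`A k` for `b = 0`, `B k` for `b ∈ 𝔽_qˣ` and `0` for `b ∉ 𝔽_q`, where
`A (k + 1) = A k + (q² - 1) B k` and `B (k + 1) = (q + 1) A k + (q² - q - 1) B k`.
-/

open Finset Module

theorem pow_sub_one_eq_one_of_pow_eq_self {M₀ : Type*} [MonoidWithZero M₀]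
    [IsRightCancelMulZero M₀] {n : ℕ} (hn : 1 ≤ n) {u : M₀} (hu : u ≠ 0) (h : u ^ n = u) :
    u ^ (n - 1) = 1 := by
  rw [← Nat.sub_add_cancel hn, pow_succ] at h
  exact (mul_eq_right₀ hu).1 h

theorem natCard_subtype_ne_and_add_one {α : Type*} [Finite α] {P : α → Prop} {a : α} (ha : P a) :
    Nat.card {x // x ≠ a ∧ P x} + 1 = Nat.card {x // P x} := by
  have := Set.ncard_sdiff_singleton_add_one (s := {x | P x}) ha (Set.toFinite _)
  rw [← Nat.card_coe_set_eq, ← Nat.card_coe_set_eq] at this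
  convert this using 4 <;> simp [and_comm]

theorem card_sub_one_eq_of_card_eq_sq {α : Type*} [Fintype α] {q : ℕ}
    (h : Fintype.card α = q ^ 2) : Fintype.card α - 1 = (q - 1) * (q + 1) := by
  rw [h, mul_comm, ← Nat.sq_sub_sq, one_pow]

section FiniteField
variable {K : Type*} [Field K] [Fintype K] {q : ℕ}

theorem exists_ringHom_eq_pow (hK : Fintype.card K = q ^ 2) :
    ∃ σ : K →+* K, ∀ x, σ x = x ^ q := by
  obtain ⟨n, hp, hcard⟩ := FiniteField.card K (ringChar K)
  have := Fact.mk hp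
  obtain ⟨e, -, rfl⟩ := (Nat.dvd_prime_pow hp).1 (hcard ▸ hK ▸ dvd_pow_self q two_ne_zero)
  exact ⟨iterateFrobenius K (ringChar K) e, fun _ => rfl⟩

theorem add_pow_of_card_eq_sq (hK : Fintype.card K = q ^ 2) (x y : K) :
    (x + y) ^ q = x ^ q + y ^ q := by
  obtain ⟨σ, hσ⟩ := exists_ringHom_eq_pow hK
  simpa only [hσ] using map_add σ x y

theorem sub_pow_of_card_eq_sq (hK : Fintype.card K = q ^ 2) (x y : K) :
    (x - y) ^ q = x ^ q - y ^ q := by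
  obtain ⟨σ, hσ⟩ := exists_ringHom_eq_pow hK
  simpa only [hσ] using map_sub σ x y

theorem two_le_of_card_eq_sq (hK : Fintype.card K = q ^ 2) : 2 ≤ q := by
  have := Fintype.one_lt_card (α := K)
  nlinarith

theorem exists_isPrimitiveRoot_card_sub_one :
    ∃ ζ : K, IsPrimitiveRoot ζ (Fintype.card K - 1) := by
  classical
  obtain ⟨g, hg⟩ := IsCyclic.exists_ofOrder_eq_natCard (α := Kˣ)
  refine ⟨g, ?_⟩
  rw [IsPrimitiveRoot.coe_units_iff, IsPrimitiveRoot.iff_orderOf, hg, Nat.card_eq_fintype_card,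
    Fintype.card_units]

theorem pow_add_one_pow_of_card_eq_sq (hK : Fintype.card K = q ^ 2) (c : K) :
    (c ^ (q + 1)) ^ q = c ^ (q + 1) := by
  rw [← pow_mul, add_one_mul, pow_add, ← sq, ← hK, FiniteField.pow_card, ← pow_succ']

theorem exists_pow_add_one_eq (hK : Fintype.card K = q ^ 2) {u : K} (hu : u ≠ 0)
    (hfix : u ^ q = u) : ∃ α : K, α ^ (q + 1) = u := by
  have hq := two_le_of_card_eq_sq hK
  have : NeZero (Fintype.card K - 1) := ⟨(Nat.sub_pos_of_lt Fintype.one_lt_card).ne'⟩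
  obtain ⟨ζ, hζ⟩ := exists_isPrimitiveRoot_card_sub_one (K := K)
  obtain ⟨i, -, rfl⟩ := hζ.eq_pow_of_pow_eq_one (FiniteField.pow_card_sub_one_eq_one u hu)
  have hdvd : (q + 1) * (q - 1) ∣ i * (q - 1) := by
    rw [mul_comm (q + 1), ← card_sub_one_eq_of_card_eq_sq hK, ← hζ.pow_eq_one_iff_dvd, pow_mul]
    exact pow_sub_one_eq_one_of_pow_eq_self (by omega) hu hfix
  obtain ⟨j, rfl⟩ := Nat.dvd_of_mul_dvd_mul_right (by omega) hdvd
  exact ⟨ζ ^ j, by rw [← pow_mul, mul_comm]⟩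

theorem card_pow_add_one_eq [DecidableEq K] (hK : Fintype.card K = q ^ 2) {u : K}
    (hfix : u ^ q = u) : #{c : K | c ^ (q + 1) = u} = if u = 0 then 1 else q + 1 := by
  split_ifs with hu
  · subst hu
    rw [Finset.card_eq_one]
    exact ⟨0, by ext c; simp⟩
  · obtain ⟨ζ, hζ⟩ := exists_isPrimitiveRoot_card_sub_one (K := K)
    have hζ' : IsPrimitiveRoot (ζ ^ (q - 1)) (q + 1) :=
      hζ.pow (Nat.sub_pos_of_lt Fintype.one_lt_card) (card_sub_one_eq_of_card_eq_sq hK)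
    have : ({c : K | c ^ (q + 1) = u} : Finset K) = (Polynomial.nthRoots (q + 1) u).toFinset := by
      ext c
      simp [Polynomial.mem_nthRoots]
    rw [this, Multiset.toFinset_card_of_nodup (hζ'.nthRoots_nodup hu), hζ'.card_nthRoots,
      if_pos (exists_pow_add_one_eq hK hu hfix)]

theorem exists_pow_ne_self (hK : Fintype.card K = q ^ 2) : ∃ x : K, x ^ q ≠ x := by
  have hq := two_le_of_card_eq_sq hK
  obtain ⟨ζ, hζ⟩ := exists_isPrimitiveRoot_card_sub_one (K := K)
  rw [card_sub_one_eq_of_card_eq_sq hK] at hζ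
  have hζ0 : ζ ≠ 0 := hζ.ne_zero (Nat.mul_ne_zero (by omega) (by omega))
  refine ⟨ζ, fun hfix => ?_⟩
  have hdvd := hζ.dvd_of_pow_eq_one _ (pow_sub_one_eq_one_of_pow_eq_self (by omega) hζ0 hfix)
  have : q + 1 ∣ 1 := (Nat.mul_dvd_mul_iff_left (by omega : 0 < q - 1)).1 (by rwa [mul_one])
  have := Nat.le_of_dvd one_pos this
  omega

end FiniteField

/- `diagFiberCount q k b` is the number of `v` with `f v v = b` for a nondegenerate hermitian form
of rank `k` over `𝔽_{q²}`; `repCount q k` is its value at any `b ∈ 𝔽_qˣ`. At `k = 0` the truncated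
`k - 1` is harmless because `q ^ 0 - (-1) ^ 0 = 0`. -/
def isotropicCount (q : ℤ) (k : ℕ) : ℤ :=
  (q ^ k - (-1) ^ k) * (q ^ (k - 1) - (-1) ^ (k - 1)) + 1

def repCount (q : ℤ) (k : ℕ) : ℤ :=
  q ^ (k - 1) * (q ^ k - (-1) ^ k)

def diagFiberCount {K : Type*} [Field K] [DecidableEq K] (q k : ℕ) (b : K) : ℤ :=
  if b = 0 then isotropicCount q k else if b ^ q = b then repCount q k else 0

theorem isotropicCount_succ (q : ℤ) (k : ℕ) :
    isotropicCount q (k + 1) = isotropicCount q k + (q ^ 2 - 1) * repCount q k := by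
  cases k with
  | zero => simp only [isotropicCount, repCount]; ring
  | succ n =>
    rcases neg_one_pow_eq_or ℤ n with h | h <;>
      simp only [isotropicCount, repCount, Nat.add_sub_cancel, pow_succ, h] <;> ring

theorem repCount_succ (q : ℤ) (k : ℕ) :
    repCount q (k + 1) = (q + 1) * isotropicCount q k + (q ^ 2 - q - 1) * repCount q k := by
  cases k with
  | zero => simp only [isotropicCount, repCount]; ring
  | succ n =>
    rcases neg_one_pow_eq_or ℤ n with h | h <;>
      simp only [isotropicCount, repCount, Nat.add_sub_cancel, pow_succ, h] <;> ring

theorem diagFiberCount_zero {K : Type*} [Field K] [DecidableEq K] (q : ℕ) (b : K) :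
    diagFiberCount q 0 b = if b = 0 then 1 else 0 := by
  unfold diagFiberCount
  split_ifs <;> simp [isotropicCount, repCount]

section Sum
variable {K : Type*} [Field K] [Fintype K] [DecidableEq K] {q : ℕ}

theorem sum_diagFiberCount_sub_mul_pow (hK : Fintype.card K = q ^ 2) (k : ℕ) {a : K}
    (ha0 : a ≠ 0) (ha : a ^ q = a) (b : K) :
    ∑ c : K, diagFiberCount q k (b - a * c ^ (q + 1)) = diagFiberCount q (k + 1) b := by
  by_cases hb : b ^ q = b
  · have hfix (c : K) : (b - a * c ^ (q + 1)) ^ q = b - a * c ^ (q + 1) := by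
      rw [sub_pow_of_card_eq_sq hK, mul_pow, hb, ha, pow_add_one_pow_of_card_eq_sq hK]
    have hzero : #{c : K | b - a * c ^ (q + 1) = 0} = if b = 0 then 1 else q + 1 := by
      have (c : K) : b - a * c ^ (q + 1) = 0 ↔ c ^ (q + 1) = b / a := by
        rw [sub_eq_zero, eq_div_iff ha0, mul_comm, eq_comm]
      simp only [this, card_pow_add_one_eq hK (by rw [div_pow, hb, ha] : (b / a) ^ q = b / a),
        div_eq_zero_iff, ha0, or_false]
    have hcard : (#{c : K | b - a * c ^ (q + 1) = 0} : ℤ) + #{c : K | ¬b - a * c ^ (q + 1) = 0}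
        = (q : ℤ) ^ 2 := by
      exact_mod_cast (card_filter_add_card_filter_not _).trans (card_univ.trans hK)
    simp only [diagFiberCount, hfix, if_true]
    rw [Finset.sum_ite, sum_const, sum_const, nsmul_eq_mul, nsmul_eq_mul]
    rw [hzero] at hcard ⊢
    split_ifs at hcard ⊢ with h0
    · rw [isotropicCount_succ]; push_cast at hcard ⊢; linear_combination (repCount q k) * hcard
    · rw [repCount_succ]; push_cast at hcard ⊢; linear_combination (repCount q k) * hcard
  · have hb0 : b ≠ 0 := by
      rintro rfl
      exact hb (zero_pow (by have := two_le_of_card_eq_sq hK; omega))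
    rw [diagFiberCount, if_neg hb0, if_neg hb]
    refine Finset.sum_eq_zero fun c _ => ?_
    have hfix : (a * c ^ (q + 1)) ^ q = a * c ^ (q + 1) := by
      rw [mul_pow, ha, pow_add_one_pow_of_card_eq_sq hK]
    have h1 : b - a * c ^ (q + 1) ≠ 0 := fun h => hb (by rw [sub_eq_zero.1 h, hfix])
    have h2 : (b - a * c ^ (q + 1)) ^ q ≠ b - a * c ^ (q + 1) := fun h => hb (by
      rw [sub_pow_of_card_eq_sq hK, hfix] at h
      exact sub_left_injective h)
    rw [diagFiberCount, if_neg h1, if_neg h2]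

end Sum

section HermitianForm
variable {K : Type*} [Field K] {V : Type*} [AddCommGroup V] [Module K V]

structure IsHermitianForm (q : ℕ) (f : V → V → K) : Prop where
  add_left : ∀ u u' v, f (u + u') v = f u v + f u' v
  smul_left : ∀ (a : K) (u v : V), f (a • u) v = a * f u v
  conj_symm : ∀ u v, f v u = f u v ^ q

namespace IsHermitianForm
variable {q : ℕ} {f : V → V → K} (hf : IsHermitianForm q f)
include hf

def toLinearMap : V →ₗ[K] V → K where
  toFun := f
  map_add' u u' := funext (hf.add_left u u')
  map_smul' a u := funext (hf.smul_left a u)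

theorem mem_ker_toLinearMap {v : V} : v ∈ LinearMap.ker hf.toLinearMap ↔ ∀ w, f v w = 0 := by
  simp [toLinearMap, funext_iff]

theorem zero_left (v : V) : f 0 v = 0 := congrFun (map_zero hf.toLinearMap) v

theorem sub_left (u u' v : V) : f (u - u') v = f u v - f u' v :=
  congrFun (map_sub hf.toLinearMap u u') v

theorem span_setOf_eq_ker :
    Submodule.span K {v : V | ∀ w, f v w = 0} = LinearMap.ker hf.toLinearMap := by
  convert Submodule.span_eq (LinearMap.ker hf.toLinearMap)
  ext
  exact hf.mem_ker_toLinearMap.symm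

theorem comp {W : Type*} [AddCommGroup W] [Module K W] (g : W →ₗ[K] V) :
    IsHermitianForm q (fun w w' => f (g w) (g w')) where
  add_left u u' v := by simp only [map_add, hf.add_left]
  smul_left a u v := by simp only [map_smul, hf.smul_left]
  conj_symm u v := hf.conj_symm (g u) (g v)

theorem apply_self_pow (v : V) : f v v ^ q = f v v := (hf.conj_symm v v).symm

theorem smul_right (a : K) (u v : V) : f u (a • v) = a ^ q * f u v := by
  rw [hf.conj_symm, hf.smul_left, mul_pow, ← hf.conj_symm]

def orthogonal (e : V) : Submodule K V :=
  LinearMap.ker (LinearMap.proj e ∘ₗ hf.toLinearMap)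

theorem mem_orthogonal {e v : V} : v ∈ hf.orthogonal e ↔ f v e = 0 := Iff.rfl

variable {e : V}

noncomputable def prodOrthogonalEquiv (he : f e e ≠ 0) : (K × hf.orthogonal e) ≃ₗ[K] V :=
  LinearEquiv.ofBijective ((LinearMap.toSpanSingleton K V e).coprod (hf.orthogonal e).subtype) <| by
    refine ⟨(injective_iff_map_eq_zero _).2 fun p hp => ?_, fun v => ?_⟩
    · have hp' : p.1 • e + (p.2 : V) = 0 := hp
      have h1 : p.1 * f e e = 0 := by
        simpa only [hf.add_left, hf.smul_left, hf.zero_left, (hf.mem_orthogonal).1 p.2.2, add_zero]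
          using congrArg (f · e) hp'
      have h1 : p.1 = 0 := (mul_eq_zero.1 h1).resolve_right he
      rw [h1, zero_smul, zero_add, ZeroMemClass.coe_eq_zero] at hp'
      exact Prod.ext h1 hp'
    · have hv : v - (f v e / f e e) • e ∈ hf.orthogonal e := by
        rw [hf.mem_orthogonal, hf.sub_left, hf.smul_left, div_mul_cancel₀ _ he, sub_self]
      exact ⟨(f v e / f e e, ⟨_, hv⟩), by simp⟩

theorem prodOrthogonalEquiv_apply (he : f e e ≠ 0) (p : K × hf.orthogonal e) :
    hf.prodOrthogonalEquiv he p = p.1 • e + p.2 := rfl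

theorem finrank_orthogonal_add_one [FiniteDimensional K V] (he : f e e ≠ 0) :
    finrank K (hf.orthogonal e) + 1 = finrank K V := by
  rw [← (hf.prodOrthogonalEquiv he).finrank_eq, finrank_prod, finrank_self, add_comm]

variable [Fintype K] (hK : Fintype.card K = q ^ 2)
include hK

theorem add_right (u v w : V) : f u (v + w) = f u v + f u w := by
  rw [hf.conj_symm, hf.add_left, add_pow_of_card_eq_sq hK, ← hf.conj_symm, ← hf.conj_symm]

theorem apply_smul_add_self {e w : V} (hw : f w e = 0) (c : K) :
    f (c • e + w) (c • e + w) = f e e * c ^ (q + 1) + f w w := by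
  have hew : f e w = 0 := by
    rw [hf.conj_symm, hw, zero_pow (by have := two_le_of_card_eq_sq hK; omega)]
  rw [hf.add_left, hf.smul_left, hf.add_right hK, hf.add_right hK, hf.smul_right, hf.smul_right,
    hew, hw]
  ring

theorem eq_zero_of_forall_apply_self_eq_zero (h : ∀ v, f v v = 0) (u v : V) : f u v = 0 := by
  have hskew (u v : V) : f u v + f v u = 0 := by
    have := h (u + v)
    rwa [hf.add_left, hf.add_right hK, hf.add_right hK, h u, h v, zero_add, add_zero] at this
  obtain ⟨x, hx⟩ := exists_pow_ne_self hK
  have hx' : (x - x ^ q) * f u v = 0 := by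
    have := hskew (x • u) v
    rw [hf.smul_left, hf.smul_right, eq_neg_of_add_eq_zero_right (hskew u v)] at this
    linear_combination this
  exact (mul_eq_zero.1 hx').resolve_left (sub_ne_zero.2 hx.symm)

theorem finrank_ker_comp_orthogonal_subtype (he : f e e ≠ 0) :
    finrank K (LinearMap.ker (hf.comp (hf.orthogonal e).subtype).toLinearMap) =
      finrank K (LinearMap.ker hf.toLinearMap) := by
  have hle : LinearMap.ker hf.toLinearMap ≤ hf.orthogonal e := fun v hv =>
    hf.mem_ker_toLinearMap.1 hv e
  have hker : LinearMap.ker (hf.comp (hf.orthogonal e).subtype).toLinearMap =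
      (LinearMap.ker hf.toLinearMap).comap (hf.orthogonal e).subtype := by
    ext w
    rw [Submodule.mem_comap, (hf.comp _).mem_ker_toLinearMap, hf.mem_ker_toLinearMap]
    refine ⟨fun h v => ?_, fun h w' => h w'⟩
    obtain ⟨p, rfl⟩ := (hf.prodOrthogonalEquiv he).surjective v
    rw [prodOrthogonalEquiv_apply, hf.add_right hK, hf.smul_right]
    simp only [Submodule.subtype_apply] at h ⊢
    rw [hf.mem_orthogonal.1 w.2, mul_zero, zero_add]
    exact h p.2
  rw [hker]
  exact (Submodule.comapSubtypeEquivOfLe hle).finrank_eq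

theorem card_apply_self_eq_sum [Finite V] (he : f e e ≠ 0) (b : K) :
    Nat.card {v // f v v = b} =
      ∑ c : K, Nat.card {w : hf.orthogonal e // f w w = b - f e e * c ^ (q + 1)} := by
  rw [← Nat.card_sigma, ← Nat.card_congr (Equiv.subtypeProdEquivSigmaSubtype
    fun c (w : hf.orthogonal e) => f w w = b - f e e * c ^ (q + 1))]
  refine Nat.card_congr ((hf.prodOrthogonalEquiv he).toEquiv.subtypeEquiv fun p => ?_).symm
  show _ ↔ f (p.1 • e + p.2) (p.1 • e + p.2) = b
  rw [hf.apply_smul_add_self hK p.2.2, eq_sub_iff_add_eq, add_comm]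

end IsHermitianForm
end HermitianForm

theorem IsHermitianForm.natCard_apply_self_eq {K : Type*} [Field K] [Fintype K]
    [DecidableEq K] {q : ℕ} {V : Type*} [AddCommGroup V] [Module K V]
    [FiniteDimensional K V] {f : V → V → K} (hf : IsHermitianForm q f)
    (hK : Fintype.card K = q ^ 2) {k l : ℕ} (hV : finrank K V = k + l)
    (hrad : finrank K (LinearMap.ker hf.toLinearMap) = l) (b : K) :
    (Nat.card {v // f v v = b} : ℤ) = q ^ (2 * l) * diagFiberCount q k b := by
  induction k generalizing V b with
  | zero =>
    have htop : LinearMap.ker hf.toLinearMap = ⊤ :=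
      Submodule.eq_top_of_finrank_eq (by rw [hrad, hV, zero_add])
    have hzero (v : V) : f v v = 0 := hf.mem_ker_toLinearMap.1 (htop ▸ Submodule.mem_top) v
    rw [diagFiberCount_zero]
    split_ifs with hb
    · subst hb
      rw [Nat.card_congr (Equiv.subtypeUnivEquiv hzero), Module.natCard_eq_pow_finrank (K := K),
        Nat.card_eq_fintype_card, hK, hV]
      push_cast
      ring
    · have : IsEmpty {v // f v v = b} := ⟨fun v => hb (v.2 ▸ hzero v)⟩
      simp
  | succ k ih =>
    have := Module.finite_of_finite K (M := V)
    obtain ⟨e, he⟩ : ∃ e, f e e ≠ 0 := by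
      by_contra! h
      have htop : LinearMap.ker hf.toLinearMap = ⊤ := eq_top_iff.2 fun v _ =>
        hf.mem_ker_toLinearMap.2 (hf.eq_zero_of_forall_apply_self_eq_zero hK h v)
      rw [htop, finrank_top, hV] at hrad
      omega
    have hW := hf.finrank_orthogonal_add_one he
    have hcount (t : K) := ih (hf.comp (hf.orthogonal e).subtype) (by omega)
      (by rw [hf.finrank_ker_comp_orthogonal_subtype hK he, hrad]) t
    rw [hf.card_apply_self_eq_sum hK he,
      ← sum_diagFiberCount_sub_mul_pow hK k he (hf.apply_self_pow e), Finset.mul_sum]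
    push_cast
    exact Finset.sum_congr rfl fun c _ => hcount _

theorem stmt19_general {q : ℕ} {K : Type*} [Field K] [Fintype K]
    (hK : Fintype.card K = q ^ 2) {V : Type*} [AddCommGroup V] [Module K V]
    [FiniteDimensional K V] {n k l : ℕ} (hn : Module.finrank K V = n)
    (hkl : n = k + l)
    (f : V → V → K)
    (hadd : ∀ u u' v, f (u + u') v = f u v + f u' v)
    (hsmul : ∀ (a : K) (u v : V), f (a • u) v = a * f u v)
    (hconj : ∀ u v, f v u = f u v ^ q)
    (hrad : Module.finrank K
      (Submodule.span K {v : V | ∀ w, f v w = 0} : Submodule K V) = l) :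
    (Nat.card {v : V // v ≠ 0 ∧ f v v = 0} : ℤ) =
      ((q : ℤ) ^ k - (-1) ^ k) * ((q : ℤ) ^ (k - 1) - (-1) ^ (k - 1)) * (q : ℤ) ^ (2 * l)
        + (q : ℤ) ^ (2 * l) - 1 := by
  classical
  have hf : IsHermitianForm q f := ⟨hadd, hsmul, hconj⟩
  have := Module.finite_of_finite K (M := V)
  have hcount := hf.natCard_apply_self_eq hK (hn.trans hkl) (hf.span_setOf_eq_ker ▸ hrad) 0
  rw [diagFiberCount, if_pos rfl, isotropicCount,
    ← natCard_subtype_ne_and_add_one (P := fun v => f v v = 0) (hf.zero_left 0)] at hcount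
  push_cast at hcount
  linear_combination hcount

/-- Let `q` be a prime power, `K = F_{q²}`, and `f` a nonzero hermitian form
(with respect to `α ↦ α^q`) on an `n`-dimensional `K`-vector space `V`, whose radical has
dimension `l`, with `n = k + l`, `k ≥ 1`. Then the number of nonzero isotropic vectors is
`(q^k - (-1)^k)(q^{k-1} - (-1)^{k-1}) q^{2l} + q^{2l} - 1`. -/
theorem stmt19 {q : ℕ} (hq : IsPrimePow q) {K : Type*} [Field K] [Fintype K]
    (hK : Fintype.card K = q ^ 2) {V : Type*} [AddCommGroup V] [Module K V]
    [FiniteDimensional K V] {n k l : ℕ} (hn : Module.finrank K V = n)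
    (hkl : n = k + l) (hk : 1 ≤ k)
    (f : V → V → K)
    (hadd : ∀ u u' v, f (u + u') v = f u v + f u' v)
    (hsmul : ∀ (a : K) (u v : V), f (a • u) v = a * f u v)
    (hconj : ∀ u v, f v u = f u v ^ q)
    (hrad : Module.finrank K
      (Submodule.span K {v : V | ∀ w, f v w = 0} : Submodule K V) = l) :
    (Nat.card {v : V // v ≠ 0 ∧ f v v = 0} : ℤ) =
      ((q : ℤ) ^ k - (-1) ^ k) * ((q : ℤ) ^ (k - 1) - (-1) ^ (k - 1)) * (q : ℤ) ^ (2 * l)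
        + (q : ℤ) ^ (2 * l) - 1 :=
  stmt19_general hK hn hkl f hadd hsmul hconj hrad
end
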